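/- arXiv:1710.08503 — 9 statements merged into one kernel-verified Lean document; each statement's English description precedes it below -/
import Mathlib

section
/- Let n ∈ ℕ and let P₁,…,Pₙ be probability measures on ℝ, each supported on exactly two points, with finite third absolute moments, positive standard deviations σᵢ := σ(Pᵢ) > 0, and with centred third moments ∫(x−μ(Pᵢ))³ dPᵢ(x) all ≥ 0. Put Qᵢ := ½(δ_{−σᵢ} + δ_{σᵢ}), σ := (σ₁² + ⋯ + σₙ²)^{1/2}, ρᵢ := ρ(Pᵢ), and f(x) := x³. Then equality holds: |∫ f d(standardization of P₁∗⋯∗Pₙ) − ∫ f d(standardization of Q₁∗⋯∗Qₙ)| = Σᵢ₌₁ⁿ (σᵢ³/σ³) · B(ρᵢ). -/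
open MeasureTheory ProbabilityTheory Real Filter Topology

noncomputable section

/-- The mean of a measure on `ℝ`. -/
def mmean (P : Measure ℝ) : ℝ := ∫ x, x ∂P

/-- The variance of a measure on `ℝ`. -/
def mvar (P : Measure ℝ) : ℝ := ∫ x, (x - mmean P) ^ 2 ∂P

/-- The standard deviation of a measure on `ℝ`. -/
def msd (P : Measure ℝ) : ℝ := Real.sqrt (mvar P)

/-- The standardization of a measure on `ℝ`: the pushforward under
`x ↦ (x - μ(P)) / σ(P)`. -/
def standardize (P : Measure ℝ) : Measure ℝ :=
  P.map fun x => (x - mmean P) / msd P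

/-- The standardized third absolute moment `ρ(P)`. -/
def stdMoment3 (P : Measure ℝ) : ℝ := ∫ x, |x| ^ 3 ∂(standardize P)

/-- The function `B(ρ) = √(ρ²/2 + (ρ/2)√(ρ²+8) − 2)`. -/
def Bfn (ρ : ℝ) : ℝ := Real.sqrt (ρ ^ 2 / 2 + ρ / 2 * Real.sqrt (ρ ^ 2 + 8) - 2)

/-- The convolution `P₁ ∗ ⋯ ∗ Pₙ` of a finite family of measures on `ℝ`,
realized as the pushforward of the product measure under summation. -/
def convFamily {n : ℕ} (P : Fin n → Measure ℝ) : Measure ℝ :=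
  Measure.map (fun x => ∑ i, x i) (Measure.pi P)

/-- The standardization of the convolution `P₁ ∗ ⋯ ∗ Pₙ`, taken with respect to
its mean `μ(P₁) + ⋯ + μ(Pₙ)` and its variance `σ(P₁)² + ⋯ + σ(Pₙ)²`. -/
def stdConvFamily {n : ℕ} (P : Fin n → Measure ℝ) : Measure ℝ :=
  (convFamily P).map fun x =>
    (x - ∑ i, mmean (P i)) / Real.sqrt (∑ i, msd (P i) ^ 2)

/-- The symmetric two-point law `½(δ₋σ + δ_σ)`. -/
def twoPoint (σ : ℝ) : Measure ℝ :=
  (1 / 2 : ENNReal) • Measure.dirac (-σ) + (1 / 2 : ENNReal) • Measure.dirac σ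

/-!
The third cumulant `κ₃(P) = ∫ (x - μ(P))³ dP` is additive over independent summands, so the third
moment of the standardized convolution is `(Σᵢ κ₃(Pᵢ)) / σ³`; it vanishes for the symmetric
laws `Qᵢ`.
A two-point law with weights `p, 1 - p` has, with `q = p (1 - p)`, standardized absolute third
moment `ρ = (1 - 2q)/√q`; then `ρ² + 8 = (1 + 2q)²/q` is a perfect square and
`B(ρ)² = (1 - 4q)/q = (1 - 2p)²/q` is the squared skewness `(κ₃/σ³)²`. Nonnegative skewness
gives `σᵢ³ B(ρᵢ) = κ₃(Pᵢ)`, and summing over `i` yields the equality.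
-/

section ThirdMoment

variable {Ω : Type*} {mΩ : MeasurableSpace Ω} {μ : Measure Ω}

theorem MeasureTheory.MemLp.integrable_pow_of_le [IsFiniteMeasure μ] {X : Ω → ℝ} {p : ℕ}
    (hX : MemLp X p μ) {k : ℕ} (hk : k ≤ p) : Integrable (fun ω => X ω ^ k) μ := by
  refine (hX.mono_exponent (by exact_mod_cast hk)).integrable_norm_pow'.mono
    (hX.aestronglyMeasurable.pow k) (ae_of_all _ fun ω => ?_)
  simp [norm_pow]

theorem memLp_of_integrable_abs_pow {X : Ω → ℝ} {p : ℕ} (hp : p ≠ 0)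
    (hm : AEStronglyMeasurable X μ) (hX : Integrable (fun ω => |X ω| ^ p) μ) : MemLp X p μ := by
  refine (integrable_norm_rpow_iff hm (by exact_mod_cast hp) (by simp)).1 ?_
  simpa [Real.norm_eq_abs] using hX

namespace ProbabilityTheory

theorem IndepFun.integrable_sq_mul {X Y : Ω → ℝ} (hXY : IndepFun X Y μ) (hX : MemLp X 2 μ)
    (hY : Integrable Y μ) : Integrable (fun ω => X ω ^ 2 * Y ω) μ :=
  (hXY.comp (φ := fun x : ℝ => x ^ 2) (ψ := id) (by fun_prop) measurable_id).integrable_mul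
    hX.integrable_sq hY

theorem IndepFun.integral_sq_mul {X Y : Ω → ℝ} (hXY : IndepFun X Y μ)
    (hX : AEMeasurable X μ) (hY : AEMeasurable Y μ) :
    ∫ ω, X ω ^ 2 * Y ω ∂μ = (∫ ω, X ω ^ 2 ∂μ) * ∫ ω, Y ω ∂μ :=
  hXY.integral_fun_comp_mul_comp (f := fun x => x ^ 2) (g := id) hX hY
    (by fun_prop) (by fun_prop)

variable [IsProbabilityMeasure μ]

theorem IndepFun.integral_add_pow_three {X Y : Ω → ℝ} (hXY : IndepFun X Y μ)
    (hX : MemLp X 3 μ) (hY : MemLp Y 3 μ) (hX0 : ∫ ω, X ω ∂μ = 0) (hY0 : ∫ ω, Y ω ∂μ = 0) :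
    ∫ ω, (X ω + Y ω) ^ 3 ∂μ = ∫ ω, X ω ^ 3 ∂μ + ∫ ω, Y ω ^ 3 ∂μ := by
  have hX2 : MemLp X 2 μ := hX.mono_exponent (by norm_num)
  have hY2 : MemLp Y 2 μ := hY.mono_exponent (by norm_num)
  have hXY2 : Integrable (fun ω => X ω ^ 2 * Y ω) μ :=
    hXY.integrable_sq_mul hX2 (hY.integrable (by norm_num))
  have hYX2 : Integrable (fun ω => Y ω ^ 2 * X ω) μ :=
    hXY.symm.integrable_sq_mul hY2 (hX.integrable (by norm_num))
  have hX3 := hX.integrable_pow_of_le le_rfl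
  have hY3 := hY.integrable_pow_of_le le_rfl
  calc ∫ ω, (X ω + Y ω) ^ 3 ∂μ
      = ∫ ω, X ω ^ 3 + 3 * (X ω ^ 2 * Y ω) + 3 * (Y ω ^ 2 * X ω) + Y ω ^ 3 ∂μ := by
        congr 1 with ω; ring
    _ = ∫ ω, X ω ^ 3 ∂μ + 3 * ∫ ω, X ω ^ 2 * Y ω ∂μ + 3 * ∫ ω, Y ω ^ 2 * X ω ∂μ
          + ∫ ω, Y ω ^ 3 ∂μ := by
        rw [integral_add (by fun_prop) hY3, integral_add (by fun_prop) (by fun_prop),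
          integral_add hX3 (by fun_prop), integral_const_mul, integral_const_mul]
    _ = ∫ ω, X ω ^ 3 ∂μ + ∫ ω, Y ω ^ 3 ∂μ := by
        rw [hXY.integral_sq_mul hX.aestronglyMeasurable.aemeasurable
            hY.aestronglyMeasurable.aemeasurable,
          hXY.symm.integral_sq_mul hY.aestronglyMeasurable.aemeasurable
            hX.aestronglyMeasurable.aemeasurable, hX0, hY0]
        ring

theorem iIndepFun.integral_sum_pow_three {ι : Type*} {X : ι → Ω → ℝ} (hX : iIndepFun X μ)
    (hmeas : ∀ i, Measurable (X i)) (hX3 : ∀ i, MemLp (X i) 3 μ)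
    (hX0 : ∀ i, ∫ ω, X i ω ∂μ = 0) (s : Finset ι) :
    ∫ ω, (∑ i ∈ s, X i ω) ^ 3 ∂μ = ∑ i ∈ s, ∫ ω, X i ω ^ 3 ∂μ := by
  classical
  induction s using Finset.induction_on with
  | empty => simp
  | insert i s hi ih =>
    have hindep : IndepFun (∑ j ∈ s, X j) (X i) μ := hX.indepFun_finsetSum_of_notMem hmeas hi
    have hsum3 : MemLp (∑ j ∈ s, X j) 3 μ := memLp_finsetSum' s fun j _ => hX3 j
    have hsum0 : ∫ ω, (∑ j ∈ s, X j) ω ∂μ = 0 := by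
      simp only [Finset.sum_apply]
      rw [integral_finsetSum s fun j _ => (hX3 j).integrable (by norm_num)]
      exact Finset.sum_eq_zero fun j _ => hX0 j
    simp_rw [Finset.sum_insert hi, add_comm (X i _)]
    rw [← ih, add_comm (∫ ω, X i ω ^ 3 ∂μ)]
    simpa only [Finset.sum_apply] using
      hindep.integral_add_pow_three hsum3 (hX3 i) hsum0 (hX0 i)

end ProbabilityTheory

end ThirdMoment

theorem integral_sum_sub_mmean_pow_three {ι : Type*} [Fintype ι] (P : ι → Measure ℝ)
    [∀ i, IsProbabilityMeasure (P i)] (hmom : ∀ i, Integrable (fun x => |x| ^ 3) (P i)) :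
    ∫ x, (∑ i, (x i - mmean (P i))) ^ 3 ∂Measure.pi P =
      ∑ i, ∫ x, (x - mmean (P i)) ^ 3 ∂P i := by
  have heval : ∀ i {f : ℝ → ℝ}, Measurable f →
      ∫ x : ι → ℝ, f (x i) ∂Measure.pi P = ∫ x, f x ∂P i :=
    fun i _ hf => integral_comp_eval hf.aestronglyMeasurable
  have hid : ∀ i, MemLp (fun x : ℝ => x) 3 (P i) := fun i =>
    memLp_of_integrable_abs_pow three_ne_zero aestronglyMeasurable_id (hmom i)
  have hX0 : ∀ i, ∫ x, (x - mmean (P i)) ∂P i = 0 := fun i => by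
    rw [integral_sub ((hid i).integrable (by norm_num)) (integrable_const _)]
    simp [mmean]
  rw [(iIndepFun_pi (X := fun i x => x - mmean (P i)) fun i => by fun_prop).integral_sum_pow_three
    (fun i => by fun_prop)
    (fun i => ((hid i).sub (memLp_const _)).comp_measurePreserving (measurePreserving_eval P i))
    (fun i => (heval i (f := fun x => x - mmean (P i)) (by fun_prop)).trans (hX0 i)) Finset.univ]
  exact Finset.sum_congr rfl fun i _ => heval i (f := fun x => (x - mmean (P i)) ^ 3) (by fun_prop)

theorem integral_pow_three_stdConvFamily {n : ℕ} (P : Fin n → Measure ℝ)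
    [∀ i, IsProbabilityMeasure (P i)] (hmom : ∀ i, Integrable (fun x => |x| ^ 3) (P i)) :
    ∫ x, x ^ 3 ∂stdConvFamily P =
      (∑ i, ∫ x, (x - mmean (P i)) ^ 3 ∂P i) / √(∑ i, msd (P i) ^ 2) ^ 3 := by
  rw [stdConvFamily, convFamily, Measure.map_map (by fun_prop) (by fun_prop),
    integral_map (by fun_prop) (by fun_prop)]
  simp only [Function.comp_apply, div_pow, ← Finset.sum_sub_distrib]
  rw [integral_div, integral_sum_sub_mmean_pow_three P hmom]

theorem Bfn_one_sub_two_mul_div_sqrt {q : ℝ} (hq : 0 < q) :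
    Bfn ((1 - 2 * q) / √q) = √((1 - 4 * q) / q) := by
  have hr2 : √q ^ 2 = q := Real.sq_sqrt hq.le
  have hsqrt : √(((1 - 2 * q) / √q) ^ 2 + 8) = (1 + 2 * q) / √q := by
    rw [Real.sqrt_eq_iff_mul_self_eq_of_pos (by positivity)]
    field_simp
    linear_combination (-8 : ℝ) * hr2
  rw [Bfn, hsqrt]
  congr 1
  field_simp
  linear_combination (4 * q - 2) * hr2

theorem stdMoment3_eq_integral (P : Measure ℝ) :
    stdMoment3 P = ∫ x, |(x - mmean P) / msd P| ^ 3 ∂P := by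
  rw [stdMoment3, standardize, integral_map (by fun_prop) (by fun_prop)]

theorem ofReal_smul_dirac_add_eq_bernoulliMeasure {X : Type*} [MeasurableSpace X] (x y : X)
    {p : ℝ} (hp : p ∈ unitInterval) :
    ENNReal.ofReal p • Measure.dirac x + ENNReal.ofReal (1 - p) • Measure.dirac y =
      Ber(x, y, ⟨p, hp⟩) := by
  rw [bernoulliMeasure_def, ← Measure.coe_nnreal_smul, ← Measure.coe_nnreal_smul,
    ENNReal.ofReal_eq_coe_nnreal hp.1, ENNReal.ofReal_eq_coe_nnreal (sub_nonneg.2 hp.2)]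
  rfl

theorem twoPoint_eq_bernoulliMeasure (σ : ℝ) :
    twoPoint σ = Ber(-σ, σ, ⟨1 / 2, by norm_num, by norm_num⟩) := calc
  twoPoint σ = ENNReal.ofReal (1 / 2) • Measure.dirac (-σ) +
      ENNReal.ofReal (1 - 1 / 2) • Measure.dirac σ := by
    norm_num [twoPoint, ENNReal.ofReal_div_of_pos]
  _ = _ := ofReal_smul_dirac_add_eq_bernoulliMeasure _ _ _

section Bernoulli

variable {a b : ℝ} {p : unitInterval}

theorem mmean_bernoulliMeasure : mmean Ber(a, b, p) = p * a + (1 - p) * b := by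
  simp [mmean, integral_bernoulliMeasure]

theorem mvar_bernoulliMeasure : mvar Ber(a, b, p) = p * (1 - p) * (a - b) ^ 2 := by
  simp only [mvar, integral_bernoulliMeasure, mmean_bernoulliMeasure, smul_eq_mul]
  ring

theorem msd_bernoulliMeasure : msd Ber(a, b, p) = √(p * (1 - p)) * |a - b| := by
  rw [msd, mvar_bernoulliMeasure, Real.sqrt_mul (mul_nonneg p.2.1 (sub_nonneg.2 p.2.2)),
    Real.sqrt_sq_eq_abs]

theorem integral_sub_mmean_pow_three_bernoulliMeasure :
    ∫ x, (x - mmean Ber(a, b, p)) ^ 3 ∂Ber(a, b, p) = p * (1 - p) * (1 - 2 * p) * (a - b) ^ 3 := by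
  simp only [integral_bernoulliMeasure, mmean_bernoulliMeasure, smul_eq_mul]
  ring

theorem stdMoment3_bernoulliMeasure (hab : a ≠ b) (hp0 : 0 < (p : ℝ)) (hp1 : (p : ℝ) < 1) :
    stdMoment3 Ber(a, b, p) = (1 - 2 * (p * (1 - p))) / √(p * (1 - p)) := by
  have hq : 0 < (p : ℝ) * (1 - p) := mul_pos hp0 (sub_pos.2 hp1)
  have hr : 0 < √(p * (1 - p) : ℝ) := Real.sqrt_pos.2 hq
  have hr2 : √(p * (1 - p) : ℝ) ^ 2 = p * (1 - p) := Real.sq_sqrt hq.le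
  have he : 0 < |a - b| := abs_pos.2 (sub_ne_zero.2 hab)
  rw [stdMoment3_eq_integral, integral_bernoulliMeasure, mmean_bernoulliMeasure,
    msd_bernoulliMeasure, smul_eq_mul, smul_eq_mul,
    show a - (p * a + (1 - p) * b) = (1 - p) * (a - b) by ring,
    show b - (p * a + (1 - p) * b) = -(p * (a - b)) by ring]
  simp only [abs_div, abs_mul, abs_neg, abs_of_pos hp0, abs_of_pos hr, abs_of_pos he,
    abs_of_pos (sub_pos.2 hp1)]
  field_simp
  linear_combination (-(1 - 2 * (p * (1 - p)) : ℝ)) * hr2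

theorem Bfn_stdMoment3_bernoulliMeasure (hab : a ≠ b) (hp0 : 0 < (p : ℝ)) (hp1 : (p : ℝ) < 1)
    (hthird : 0 ≤ ∫ x, (x - mmean Ber(a, b, p)) ^ 3 ∂Ber(a, b, p)) :
    Bfn (stdMoment3 Ber(a, b, p)) =
      (∫ x, (x - mmean Ber(a, b, p)) ^ 3 ∂Ber(a, b, p)) / msd Ber(a, b, p) ^ 3 := by
  have hq : 0 < (p : ℝ) * (1 - p) := mul_pos hp0 (sub_pos.2 hp1)
  have hsd : 0 ≤ msd Ber(a, b, p) := Real.sqrt_nonneg _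
  have hsd2 : msd Ber(a, b, p) ^ 2 = p * (1 - p) * (a - b) ^ 2 := by
    rw [msd, Real.sq_sqrt (by rw [mvar_bernoulliMeasure]; positivity), mvar_bernoulliMeasure]
  rw [stdMoment3_bernoulliMeasure hab hp0 hp1, Bfn_one_sub_two_mul_div_sqrt hq,
    ← Real.sqrt_sq (div_nonneg hthird (pow_nonneg hsd 3)), div_pow, pow_right_comm _ 3 2, hsd2,
    integral_sub_mmean_pow_three_bernoulliMeasure]
  congr 1
  field_simp
  ring

end Bernoulli

instance (σ : ℝ) : IsProbabilityMeasure (twoPoint σ) :=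
  twoPoint_eq_bernoulliMeasure σ ▸ inferInstance

theorem integrable_twoPoint (σ : ℝ) (f : ℝ → ℝ) : Integrable f (twoPoint σ) :=
  twoPoint_eq_bernoulliMeasure σ ▸ integrable_bernoulliMeasure _ _ _ f

theorem integral_sub_mmean_pow_three_twoPoint (σ : ℝ) :
    ∫ x, (x - mmean (twoPoint σ)) ^ 3 ∂twoPoint σ = 0 := by
  rw [twoPoint_eq_bernoulliMeasure, integral_sub_mmean_pow_three_bernoulliMeasure]
  norm_num

theorem berry_esseen_smooth_equality_general
    {n : ℕ}
    (P : Fin n → Measure ℝ) [∀ i, IsProbabilityMeasure (P i)]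
    (hmom : ∀ i, Integrable (fun x => |x| ^ 3) (P i))
    (hsd : ∀ i, 0 < msd (P i))
    (htwo : ∀ i, ∃ a b : ℝ, a ≠ b ∧ ∃ p : ℝ, 0 < p ∧ p < 1 ∧
      P i = ENNReal.ofReal p • Measure.dirac a + ENNReal.ofReal (1 - p) • Measure.dirac b)
    (hthird : ∀ i, 0 ≤ ∫ x, (x - mmean (P i)) ^ 3 ∂(P i)) :
    |(∫ x, x ^ 3 ∂(stdConvFamily P)) -
        ∫ x, x ^ 3 ∂(stdConvFamily fun i => twoPoint (msd (P i)))| =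
      ∑ i, msd (P i) ^ 3 / Real.sqrt (∑ j, msd (P j) ^ 2) ^ 3 * Bfn (stdMoment3 (P i)) := by
  rw [integral_pow_three_stdConvFamily P hmom,
    integral_pow_three_stdConvFamily _ fun i => integrable_twoPoint _ _,
    Finset.sum_eq_zero fun i _ => integral_sub_mmean_pow_three_twoPoint _, zero_div, sub_zero,
    abs_of_nonneg (div_nonneg (Finset.sum_nonneg fun i _ => hthird i) (by positivity)),
    Finset.sum_div]
  refine Finset.sum_congr rfl fun i _ => ?_
  obtain ⟨a, b, hab, p, hp0, hp1, hP⟩ := htwo i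
  rw [ofReal_smul_dirac_add_eq_bernoulliMeasure a b ⟨hp0.le, hp1.le⟩] at hP
  have hσ := hsd i
  have hT := hthird i
  rw [hP] at hσ hT ⊢
  rw [Bfn_stdMoment3_bernoulliMeasure hab hp0 hp1 hT]
  field_simp

/-- **Theorem (equality case).** If each `Pᵢ` is a two-point law with centred third
moments all `≥ 0`, then for `f(x) = x³` equality holds:
`|∫ f d(std conv Pᵢ) − ∫ f d(std conv Qᵢ)| = Σᵢ (σᵢ³/σ³) B(ρᵢ)`. -/
theorem berry_esseen_smooth_equality
    {n : ℕ} (hn : 0 < n)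
    (P : Fin n → Measure ℝ) [∀ i, IsProbabilityMeasure (P i)]
    (hmom : ∀ i, Integrable (fun x => |x| ^ 3) (P i))
    (hsd : ∀ i, 0 < msd (P i))
    (htwo : ∀ i, ∃ a b : ℝ, a ≠ b ∧ ∃ p : ℝ, 0 < p ∧ p < 1 ∧
      P i = ENNReal.ofReal p • Measure.dirac a + ENNReal.ofReal (1 - p) • Measure.dirac b)
    (hthird : ∀ i, 0 ≤ ∫ x, (x - mmean (P i)) ^ 3 ∂(P i)) :
    |(∫ x, x ^ 3 ∂(stdConvFamily P)) -
        ∫ x, x ^ 3 ∂(stdConvFamily fun i => twoPoint (msd (P i)))| =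
      ∑ i, msd (P i) ^ 3 / Real.sqrt (∑ j, msd (P j) ^ 2) ^ 3 * Bfn (stdMoment3 (P i)) :=
  berry_esseen_smooth_equality_general P hmom hsd htwo hthird
end
end

section
/- For every n ∈ ℕ and every t = (t₁,…,tₙ) ∈ ℝⁿ one has 0 ≤ ∏ᵢ₌₁ⁿ cos tᵢ − 1 + ½·Σᵢ₌₁ⁿ tᵢ² ≤ (1/24)·Σᵢ₌₁ⁿ tᵢ⁴ + ¼·Σ_{1 ≤ i < j ≤ n} tᵢ²tⱼ². -/
open Finset Real

/-! With `cᵢ = cos tᵢ` and `aᵢ = tᵢ² / 2` one has `|cᵢ| ≤ 1` and `0 ≤ cᵢ - 1 + aᵢ ≤ tᵢ⁴ / 24`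
(Taylor). Appending a factor `c` with weight `a` to a product `P` with weight sum `A` gives
`c P - 1 + (A + a) = (P - 1 + A) + (c - 1 + a) + (1 - P) (1 - c)`, where `0 ≤ 1 - P ≤ A` and
`0 ≤ 1 - c ≤ a` make the last term lie in `[0, A a]`; induction on the number of factors then
yields both bounds. -/

theorem Real.cos_le_one_sub_sq_div_two_add_pow_four_div_24 (x : ℝ) :
    cos x ≤ 1 - x ^ 2 / 2 + x ^ 4 / 24 := by
  wlog hx : 0 ≤ x
  · simpa [Even.neg_pow (by decide : Even 4)] using this (-x) (by linarith)
  let f (y : ℝ) : ℝ := 1 - y ^ 2 / 2 + y ^ 4 / 24 - cos y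
  have hderiv (y : ℝ) : deriv f y = sin y - (y - y ^ 3 / 6) := by
    simp (disch := fun_prop) [f]
    ring
  have hmono : MonotoneOn f (Set.Ici 0) := by
    apply monotoneOn_of_deriv_nonneg (convex_Ici 0) (by fun_prop) (by fun_prop)
    intro y hy
    rw [interior_Ici, Set.mem_Ioi] at hy
    rw [hderiv, sub_nonneg]
    exact sin_ge_sub_cube hy.le
  have := hmono Set.self_mem_Ici hx hx
  simp [f] at this
  linarith

namespace Finset

variable {ι : Type*}

theorem sum_sum_filter_lt_insert_of_forall_lt {M : Type*} [LinearOrder ι] [AddCommMonoid M]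
    {s : Finset ι} {m : ι} (hm : ∀ i ∈ s, i < m) (f : ι → ι → M) :
    ∑ i ∈ insert m s, ∑ j ∈ insert m s with i < j, f i j =
      ∑ i ∈ s, ∑ j ∈ s with i < j, f i j + ∑ i ∈ s, f i m := by
  have hms : m ∉ s := fun h => lt_irrefl m (hm m h)
  have hlast : ∑ j ∈ insert m s with m < j, f m j = 0 :=
    sum_eq_zero fun j hj => by
      simp only [mem_filter, mem_insert] at hj
      obtain ⟨rfl | hj, hmj⟩ := hj
      · exact absurd hmj (lt_irrefl _)
      · exact absurd hmj (hm j hj).not_gt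
  rw [sum_insert hms, hlast, zero_add, ← sum_add_distrib]
  refine sum_congr rfl fun i hi => ?_
  rw [filter_insert, if_pos (hm i hi), sum_insert (fun h => hms (mem_filter.1 h).1), add_comm]

theorem prod_le_one_of_abs_le_one {s : Finset ι} {c : ι → ℝ} (hc : ∀ i ∈ s, |c i| ≤ 1) :
    ∏ i ∈ s, c i ≤ 1 :=
  (le_abs_self _).trans <| by
    rw [abs_prod]
    exact prod_le_one (fun _ _ => abs_nonneg _) hc

/-- A Weierstrass product inequality. -/
theorem one_sub_sum_le_prod {s : Finset ι} {c a : ι → ℝ}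
    (hc : ∀ i ∈ s, |c i| ≤ 1) (ha : ∀ i ∈ s, 1 - a i ≤ c i) :
    1 - ∑ i ∈ s, a i ≤ ∏ i ∈ s, c i := by
  induction s using Finset.cons_induction with
  | empty => simp
  | cons m s hms ih =>
    simp only [forall_mem_cons] at hc ha
    rw [prod_cons, sum_cons]
    have hP := prod_le_one_of_abs_le_one hc.2
    have hcm := (le_abs_self _).trans hc.1
    have hcross : 0 ≤ (1 - ∏ i ∈ s, c i) * (1 - c m) := mul_nonneg (by linarith) (by linarith)
    linarith [ih hc.2 ha.2, ha.1]

theorem prod_sub_one_add_sum_le [LinearOrder ι] {s : Finset ι} {c a : ι → ℝ}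
    (hc : ∀ i ∈ s, |c i| ≤ 1) (ha : ∀ i ∈ s, 1 - a i ≤ c i) :
    ∏ i ∈ s, c i - 1 + ∑ i ∈ s, a i ≤
      ∑ i ∈ s, (c i - 1 + a i) + ∑ i ∈ s, ∑ j ∈ s with i < j, a i * a j := by
  induction s using Finset.induction_on_max with
  | empty => simp
  | insert m s hm ih =>
    have hms : m ∉ s := fun h => lt_irrefl m (hm m h)
    simp only [forall_mem_insert] at hc ha
    rw [prod_insert hms, sum_insert hms, sum_insert hms,
      sum_sum_filter_lt_insert_of_forall_lt hm, ← sum_mul]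
    have hP := prod_le_one_of_abs_le_one hc.2
    have hlow := one_sub_sum_le_prod hc.2 ha.2
    have hcm := (le_abs_self _).trans hc.1
    have hcross : (1 - ∏ i ∈ s, c i) * (1 - c m) ≤ (∑ i ∈ s, a i) * a m :=
      mul_le_mul (by linarith) (by linarith) (by linarith) (by linarith)
    linarith [ih hc.2 ha.2]

end Finset

/-- **Lemma.** For every `n ∈ ℕ` and `t ∈ ℝⁿ`,
`0 ≤ ∏ᵢ cos tᵢ − 1 + ½ Σᵢ tᵢ² ≤ (1/24) Σᵢ tᵢ⁴ + ¼ Σ_{i<j} tᵢ² tⱼ²`. -/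
theorem prod_cos_bounds (n : ℕ) (t : Fin n → ℝ) :
    0 ≤ (∏ i, Real.cos (t i)) - 1 + 1 / 2 * ∑ i, t i ^ 2 ∧
    (∏ i, Real.cos (t i)) - 1 + 1 / 2 * ∑ i, t i ^ 2 ≤
      1 / 24 * ∑ i, t i ^ 4 +
        1 / 4 * ∑ i, ∑ j ∈ Finset.univ.filter (fun j => i < j), t i ^ 2 * t j ^ 2 := by
  have hc : ∀ i ∈ univ, |cos (t i)| ≤ 1 := fun i _ => abs_cos_le_one _
  have ha : ∀ i ∈ univ, 1 - t i ^ 2 / 2 ≤ cos (t i) := fun i _ => one_sub_sq_div_two_le_cos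
  have hsum : 1 / 2 * ∑ i, t i ^ 2 = ∑ i, t i ^ 2 / 2 := by
    rw [mul_sum]; exact sum_congr rfl fun i _ => by ring
  have hcross : ∑ i, ∑ j with i < j, t i ^ 2 / 2 * (t j ^ 2 / 2) =
      1 / 4 * ∑ i, ∑ j with i < j, t i ^ 2 * t j ^ 2 := by
    simp only [mul_sum]; exact sum_congr rfl fun i _ => sum_congr rfl fun j _ => by ring
  have hquartic : ∑ i, (cos (t i) - 1 + t i ^ 2 / 2) ≤ 1 / 24 * ∑ i, t i ^ 4 := by
    rw [mul_sum]
    exact sum_le_sum fun i _ => by linarith [cos_le_one_sub_sq_div_two_add_pow_four_div_24 (t i)]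
  rw [hsum]
  constructor
  · linarith [one_sub_sum_le_prod hc ha]
  · linarith [prod_sub_one_add_sum_le hc ha]
end

section
/- The functions B and A, defined on [1,∞) by B(ρ) := √(ρ²/2 + (ρ/2)·√(ρ²+8) − 2) and A(ρ) := B(ρ)/ρ, are continuous, strictly concave and strictly increasing, with A(1) = B(1) = 0, lim_{ρ→1⁺} A(ρ)/√(ρ−1) = √(8/3), and lim_{ρ→∞} A(ρ) = 1. In particular, 0 < A(ρ) < 1 and ρ − 1 < B(ρ) < ρ for every ρ ∈ (1,∞). -/
/-!
Substitute `T = ρ + √(ρ² + 8)`, an increasing function of `ρ` with `T² = 2ρT + 8` and `T(1) = 4`.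
Then `B² = (T² - 16)/4 = ρ² - (4/T)²`, and `0 < 4/T < 1` gives `ρ - 1 < B < ρ`, hence
`1 - 1/ρ < A < 1` and `A → 1`. The derivatives become `B' = (1 - 192/T⁴ - 1024/T⁶)^(-1/2)` and
`A' = 32 / (ρ² (T² + 8) B)`: both are positive and strictly decreasing in `ρ`, which gives
monotonicity and strict concavity. Near `ρ = 1`, `A / √(ρ - 1) = √(T (T + 4) / (2 (T + 2))) / ρ`,
which is continuous with value `√(8/3)` at `1`.
-/

open Filter Topology

noncomputable section

def Afn (ρ : ℝ) : ℝ := Bfn ρ / ρ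

open Set

def Tfn (ρ : ℝ) : ℝ := ρ + √(ρ ^ 2 + 8)

@[fun_prop]
theorem continuous_Tfn : Continuous Tfn := by
  unfold Tfn
  fun_prop

theorem sq_sqrt_sq_add_eight (ρ : ℝ) : √(ρ ^ 2 + 8) ^ 2 = ρ ^ 2 + 8 :=
  Real.sq_sqrt (by positivity)

theorem Tfn_pos (ρ : ℝ) : 0 < Tfn ρ := by
  have h : |ρ| < √(ρ ^ 2 + 8) := (Real.lt_sqrt (abs_nonneg ρ)).2 (by rw [sq_abs]; linarith)
  unfold Tfn
  linarith [neg_abs_le ρ]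

theorem Tfn_sq (ρ : ℝ) : Tfn ρ ^ 2 = 2 * ρ * Tfn ρ + 8 := by
  unfold Tfn
  linear_combination sq_sqrt_sq_add_eight ρ

theorem Tfn_one : Tfn 1 = 4 := by
  rw [Tfn, show (1 : ℝ) ^ 2 + 8 = 3 ^ 2 by norm_num, Real.sqrt_sq (by norm_num)]
  norm_num

theorem hasDerivAt_Tfn (ρ : ℝ) : HasDerivAt Tfn (2 * Tfn ρ ^ 2 / (Tfn ρ ^ 2 + 8)) ρ := by
  refine ((hasDerivAt_id ρ).add (((hasDerivAt_pow 2 ρ).add_const 8).sqrt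
    (by positivity))).congr_deriv ?_
  unfold Tfn
  field_simp
  linear_combination (-2 * (ρ + √(ρ ^ 2 + 8))) * sq_sqrt_sq_add_eight ρ

theorem strictMono_Tfn : StrictMono Tfn :=
  strictMono_of_deriv_pos fun ρ => by
    rw [(hasDerivAt_Tfn ρ).deriv]
    have := Tfn_pos ρ
    positivity

theorem four_lt_Tfn {ρ : ℝ} (hρ : 1 < ρ) : 4 < Tfn ρ :=
  Tfn_one ▸ strictMono_Tfn hρ

theorem continuous_Bfn : Continuous Bfn := by
  unfold Bfn
  fun_prop

theorem Bfn_eq_sqrt_Tfn (ρ : ℝ) : Bfn ρ = √((Tfn ρ ^ 2 - 16) / 4) := by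
  rw [Bfn, Tfn]
  congr 1
  linear_combination (-1 / 4 : ℝ) * sq_sqrt_sq_add_eight ρ

theorem Bfn_sq {ρ : ℝ} (hρ : 1 < ρ) : Bfn ρ ^ 2 = (Tfn ρ ^ 2 - 16) / 4 := by
  rw [Bfn_eq_sqrt_Tfn, Real.sq_sqrt (by nlinarith [four_lt_Tfn hρ])]

theorem Bfn_pos {ρ : ℝ} (hρ : 1 < ρ) : 0 < Bfn ρ := by
  rw [Bfn_eq_sqrt_Tfn]
  exact Real.sqrt_pos.2 (by nlinarith [four_lt_Tfn hρ])

theorem Bfn_one : Bfn 1 = 0 := by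
  rw [Bfn_eq_sqrt_Tfn, Tfn_one]
  norm_num

theorem Afn_one : Afn 1 = 0 := by
  rw [Afn, Bfn_one, zero_div]

theorem Bfn_eq_sqrt_sq_sub (ρ : ℝ) : Bfn ρ = √(ρ ^ 2 - (4 / Tfn ρ) ^ 2) := by
  have := Tfn_pos ρ
  rw [Bfn_eq_sqrt_Tfn]
  congr 1
  field_simp
  linear_combination (Tfn ρ ^ 2 - 8 + 2 * ρ * Tfn ρ) * Tfn_sq ρ

theorem sub_one_lt_Bfn {ρ : ℝ} (hρ : 1 < ρ) : ρ - 1 < Bfn ρ := by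
  have hc : 4 / Tfn ρ < 1 := (div_lt_one (Tfn_pos ρ)).2 (four_lt_Tfn hρ)
  have hc0 : 0 < 4 / Tfn ρ := div_pos (by norm_num) (Tfn_pos ρ)
  rw [Bfn_eq_sqrt_sq_sub, Real.lt_sqrt (by linarith)]
  nlinarith

theorem Bfn_lt_self {ρ : ℝ} (hρ : 1 < ρ) : Bfn ρ < ρ := by
  have hc0 : 0 < 4 / Tfn ρ := div_pos (by norm_num) (Tfn_pos ρ)
  rw [Bfn_eq_sqrt_sq_sub, Real.sqrt_lt' (by linarith)]
  nlinarith

def Pfn (t : ℝ) : ℝ := 1 - 192 / t ^ 4 - 1024 / t ^ 6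

theorem strictMonoOn_Pfn : StrictMonoOn Pfn (Ioi 0) := by
  intro a (ha : 0 < a) b _ hab
  unfold Pfn
  gcongr

theorem Pfn_pos {t : ℝ} (ht : 4 < t) : 0 < Pfn t := by
  have h4 : Pfn 4 = 0 := by norm_num [Pfn]
  exact h4 ▸ strictMonoOn_Pfn (by norm_num : (0 : ℝ) < 4) (zero_lt_four.trans ht) ht

theorem strictAntiOn_inv_sqrt_Pfn : StrictAntiOn (fun t => (√(Pfn t))⁻¹) (Ioi 4) := by
  intro a (ha : 4 < a) b (hb : 4 < b) hab
  have hPa := Pfn_pos ha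
  have hPab := strictMonoOn_Pfn (zero_lt_four.trans ha) (zero_lt_four.trans hb) hab
  exact (inv_lt_inv₀ (Real.sqrt_pos.2 (hPa.trans hPab)) (Real.sqrt_pos.2 hPa)).2
    (Real.sqrt_lt_sqrt hPa.le hPab)

theorem sqrt_Pfn_Tfn {ρ : ℝ} (hρ : 1 < ρ) :
    √(Pfn (Tfn ρ)) = 2 * (Tfn ρ ^ 2 + 8) * Bfn ρ / Tfn ρ ^ 3 := by
  have := Tfn_pos ρ
  have := Bfn_pos hρ
  rw [Real.sqrt_eq_iff_mul_self_eq_of_pos (by positivity), ← sq, div_pow, mul_pow, Bfn_sq hρ, Pfn]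
  field_simp
  ring

theorem hasDerivAt_Bfn {ρ : ℝ} (hρ : 1 < ρ) :
    HasDerivAt Bfn (√(Pfn (Tfn ρ)))⁻¹ ρ := by
  have hT := four_lt_Tfn hρ
  have h := (((hasDerivAt_Tfn ρ).fun_pow 2).sub_const 16 |>.div_const 4).sqrt
    (by nlinarith : (Tfn ρ ^ 2 - 16) / 4 ≠ 0)
  rw [funext Bfn_eq_sqrt_Tfn]
  refine h.congr_deriv ?_
  have := Bfn_pos hρ
  rw [sqrt_Pfn_Tfn hρ, ← Bfn_eq_sqrt_Tfn]
  field_simp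
  ring

theorem hasDerivAt_Afn {ρ : ℝ} (hρ : 1 < ρ) :
    HasDerivAt Afn (32 / (ρ ^ 2 * (Tfn ρ ^ 2 + 8) * Bfn ρ)) ρ := by
  have := Bfn_pos hρ
  refine ((hasDerivAt_Bfn hρ).fun_div (hasDerivAt_id ρ) (by positivity)).congr_deriv ?_
  rw [sqrt_Pfn_Tfn hρ]
  simp only [id]
  field_simp
  linear_combination (-2 * (Tfn ρ ^ 2 + 8)) * Bfn_sq hρ - Tfn ρ ^ 2 / 2 * Tfn_sq ρ

theorem continuousOn_Afn : ContinuousOn Afn (Ici 1) :=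
  continuous_Bfn.continuousOn.div continuousOn_id fun _ hx => (zero_lt_one.trans_le hx).ne'

theorem strictMonoOn_Bfn : StrictMonoOn Bfn (Ici 1) :=
  strictMonoOn_of_deriv_pos (convex_Ici 1) continuous_Bfn.continuousOn fun x hx => by
    rw [interior_Ici] at hx
    rw [(hasDerivAt_Bfn hx).deriv]
    exact inv_pos.2 (Real.sqrt_pos.2 (Pfn_pos (four_lt_Tfn hx)))

theorem strictMonoOn_Afn : StrictMonoOn Afn (Ici 1) :=
  strictMonoOn_of_deriv_pos (convex_Ici 1) continuousOn_Afn fun x hx => by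
    rw [interior_Ici] at hx
    rw [(hasDerivAt_Afn hx).deriv]
    have := Bfn_pos hx
    have : 0 < x := zero_lt_one.trans hx
    positivity

theorem strictConcaveOn_Bfn : StrictConcaveOn ℝ (Ici 1) Bfn := by
  refine StrictAntiOn.strictConcaveOn_of_deriv (convex_Ici 1) continuous_Bfn.continuousOn ?_
  rw [interior_Ici]
  intro x (hx : 1 < x) y (hy : 1 < y) hxy
  rw [(hasDerivAt_Bfn hx).deriv, (hasDerivAt_Bfn hy).deriv]
  exact strictAntiOn_inv_sqrt_Pfn (four_lt_Tfn hx) (four_lt_Tfn hy) (strictMono_Tfn hxy)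

theorem strictConcaveOn_Afn : StrictConcaveOn ℝ (Ici 1) Afn := by
  refine StrictAntiOn.strictConcaveOn_of_deriv (convex_Ici 1) continuousOn_Afn ?_
  rw [interior_Ici]
  intro x (hx : 1 < x) y (hy : 1 < y) hxy
  rw [(hasDerivAt_Afn hx).deriv, (hasDerivAt_Afn hy).deriv]
  have hT := strictMono_Tfn hxy
  have hB := strictMonoOn_Bfn hx.le hy.le hxy
  have := Bfn_pos hx
  have := Tfn_pos x
  gcongr

theorem tendsto_Afn_div_sqrt_sub_one :
    Tendsto (fun ρ => Afn ρ / √(ρ - 1)) (𝓝[>] 1) (𝓝 √(8 / 3)) := by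
  have hc : ContinuousAt (fun ρ => √(Tfn ρ * (Tfn ρ + 4) / (2 * (Tfn ρ + 2))) / ρ) 1 :=
    ((Continuous.div (by fun_prop) (by fun_prop) fun ρ => by have := Tfn_pos ρ; positivity)
      |>.sqrt.continuousAt).div continuousAt_id one_ne_zero
  have hval : √(Tfn 1 * (Tfn 1 + 4) / (2 * (Tfn 1 + 2))) / 1 = √(8 / 3) := by
    rw [Tfn_one]
    norm_num
  refine Tendsto.congr' ?_ (hval ▸ (hc.continuousWithinAt (s := Ioi 1)).tendsto)
  filter_upwards [self_mem_nhdsWithin] with ρ (hρ : 1 < ρ)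
  rw [Afn, div_right_comm, Bfn_eq_sqrt_Tfn, ← Real.sqrt_div' _ (by linarith : 0 ≤ ρ - 1)]
  have := Tfn_pos ρ
  have : ρ - 1 ≠ 0 := by linarith
  congr 2
  field_simp
  linear_combination (-2 * (Tfn ρ + 4)) * Tfn_sq ρ

theorem tendsto_Afn_atTop : Tendsto Afn atTop (𝓝 1) := by
  refine tendsto_of_tendsto_of_tendsto_of_le_of_le' (g := fun ρ => 1 - ρ⁻¹)
    (by simpa using (tendsto_inv_atTop_zero (𝕜 := ℝ)).const_sub 1) tendsto_const_nhds ?_ ?_ <;>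
    filter_upwards [eventually_gt_atTop 1] with ρ hρ
  · calc 1 - ρ⁻¹ = (ρ - 1) / ρ := by field_simp
      _ ≤ Afn ρ := by rw [Afn]; gcongr; exact (sub_one_lt_Bfn hρ).le
  · exact (div_le_one (by linarith)).2 (Bfn_lt_self hρ).le

/-- **Lemma (properties of `A` and `B`).** On `[1,∞)`, the functions `A` and `B` are
continuous, strictly concave and strictly increasing, with `A(1) = B(1) = 0`,
`lim_{ρ→1⁺} A(ρ)/√(ρ−1) = √(8/3)`, `lim_{ρ→∞} A(ρ) = 1`; in particular
`0 < A(ρ) < 1` and `ρ − 1 < B(ρ) < ρ` for `ρ ∈ (1,∞)`. -/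
theorem A_and_B_properties :
    ContinuousOn Bfn (Set.Ici 1) ∧ ContinuousOn Afn (Set.Ici 1) ∧
      StrictConcaveOn ℝ (Set.Ici 1) Bfn ∧ StrictConcaveOn ℝ (Set.Ici 1) Afn ∧
      StrictMonoOn Bfn (Set.Ici 1) ∧ StrictMonoOn Afn (Set.Ici 1) ∧
      Afn 1 = 0 ∧ Bfn 1 = 0 ∧
      Filter.Tendsto (fun ρ => Afn ρ / Real.sqrt (ρ - 1)) (nhdsWithin 1 (Set.Ioi 1))
        (nhds (Real.sqrt (8 / 3))) ∧
      Filter.Tendsto Afn Filter.atTop (nhds 1) ∧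
      ∀ ρ : ℝ, 1 < ρ → 0 < Afn ρ ∧ Afn ρ < 1 ∧ ρ - 1 < Bfn ρ ∧ Bfn ρ < ρ :=
  ⟨continuous_Bfn.continuousOn, continuousOn_Afn, strictConcaveOn_Bfn, strictConcaveOn_Afn,
    strictMonoOn_Bfn, strictMonoOn_Afn, Afn_one, Bfn_one, tendsto_Afn_div_sqrt_sub_one,
    tendsto_Afn_atTop, fun ρ hρ =>
      ⟨div_pos (Bfn_pos hρ) (by linarith), (div_lt_one (by linarith)).2 (Bfn_lt_self hρ),
        sub_one_lt_Bfn hρ, Bfn_lt_self hρ⟩⟩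
end
end

section
/- Let m₀, m₁ ∈ ℕ₀, let x₀ < x₁ be real numbers, and let y_{0,0},…,y_{0,m₀}, y_{1,0},…,y_{1,m₁} ∈ ℝ. Let p be the (unique) polynomial of degree at most m₀ + m₁ + 1 satisfying p^{(j)}(x₀) = y_{0,j} for j ∈ {0,…,m₀} and p^{(j)}(x₁) = y_{1,j} for j ∈ {0,…,m₁}. If y_{0,j} ≥ 0 for all j ∈ {0,…,m₀} and (−1)^j·y_{1,j} ≥ 0 for all j ∈ {0,…,m₁}, then either p(x) > 0 for all x ∈ (x₀,x₁), or all the numbers y_{i,j} are zero and p is the zero polynomial. -/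
/-!
With `N = k₀ + k₁` conditions in all (`k₀` at `x₀`, `k₁` at `x₁`) and `deg p < N + 1`, the
polynomial `q = (x₁ - x) p' + N p = (x₁ - x)^(N+1) (p / (x₁ - x)^N)'` has degree `< N` and
satisfies the same sign conditions with one condition fewer at `x₀`. By induction `q > 0` on
`(x₀, x₁)` or `q = 0`, so `p / (x₁ - x)^N` increases (or stays constant) from
`p(x₀) / (x₁ - x₀)^N ≥ 0`. When no condition at `x₀` is left, all derivatives of `p` at `x₁`
have alternating signs; `-p'` inherits this, so `p` decreases towards `p(x₁) ≥ 0`.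
-/

open Polynomial Set

namespace Polynomial

theorem degree_derivative_lt_of_degree_lt_succ {R : Type*} [Semiring R] {p : R[X]} {k : ℕ}
    (h : p.degree < ↑(k + 1)) : (derivative p).degree < k := by
  rw [degree_lt_iff_coeff_zero] at h ⊢
  intro m hm
  rw [coeff_derivative, h (m + 1) (by omega), zero_mul]

noncomputable def twistedDeriv (a : ℝ) (N : ℕ) (p : ℝ[X]) : ℝ[X] :=
  (C a - X) * derivative p + C (N : ℝ) * p

variable {a : ℝ} {N : ℕ} {p : ℝ[X]}

theorem coeff_twistedDeriv_succ (m : ℕ) : (twistedDeriv a N p).coeff (m + 1) =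
    a * (p.coeff (m + 2) * (m + 2)) + (N - (m + 1)) * p.coeff (m + 1) := by
  simp only [twistedDeriv, sub_mul, coeff_add, coeff_sub, coeff_C_mul, coeff_X_mul,
    coeff_derivative]
  push_cast
  ring

theorem degree_twistedDeriv_lt (h : p.degree ≤ N) : (twistedDeriv a N p).degree < N := by
  rw [degree_lt_iff_coeff_zero]
  intro m hm
  have hp : ∀ i, N < i → p.coeff i = 0 := fun i hi =>
    coeff_eq_zero_of_degree_lt (h.trans_lt (by exact_mod_cast hi))
  rcases m with _ | m
  · simp [twistedDeriv, coeff_derivative, hp 1 (by omega), Nat.le_zero.mp hm]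
  rw [coeff_twistedDeriv_succ, hp (m + 2) (by omega)]
  rcases hm.eq_or_lt with rfl | hlt
  · simp
  · simp [hp (m + 1) hlt]

theorem iterate_derivative_twistedDeriv (j : ℕ) :
    derivative^[j] (twistedDeriv a N p) =
      (C a - X) * derivative^[j + 1] p + C ((N : ℝ) - j) * derivative^[j] p := by
  induction j with
  | zero => simp [twistedDeriv]
  | succ j ih =>
    rw [Function.iterate_succ_apply', ih, Function.iterate_succ_apply' _ (j + 1),
      Function.iterate_succ_apply' _ j]
    simp only [derivative_mul, derivative_C, derivative_X, Nat.cast_succ,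
      map_sub, map_add, map_one]
    ring

theorem hasDerivAt_eval_div_pow {x : ℝ} (hx : x ≠ a) :
    HasDerivAt (fun y => p.eval y / (a - y) ^ N)
      ((twistedDeriv a N p).eval x / (a - x) ^ (N + 1)) x := by
  have hax : a - x ≠ 0 := sub_ne_zero.mpr hx.symm
  refine ((p.hasDerivAt x).div (((hasDerivAt_id x).const_sub a).pow N)
    (pow_ne_zero N hax)).congr_deriv ?_
  rcases N with _ | N
  · simp [twistedDeriv]; field_simp
  · simp [twistedDeriv]; field_simp; ring

theorem eval_iterate_derivative_twistedDeriv_nonneg {b : ℝ} {j : ℕ} (hba : b ≤ a) (hjN : j ≤ N)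
    (hsucc : 0 ≤ (derivative^[j + 1] p).eval b) (hj : 0 ≤ (derivative^[j] p).eval b) :
    0 ≤ (derivative^[j] (twistedDeriv a N p)).eval b := by
  rw [iterate_derivative_twistedDeriv]
  simp only [eval_add, eval_mul, eval_sub, eval_C, eval_X]
  exact add_nonneg (mul_nonneg (sub_nonneg.mpr hba) hsucc)
    (mul_nonneg (sub_nonneg.mpr (by exact_mod_cast hjN)) hj)

theorem eval_iterate_derivative_twistedDeriv_self (j : ℕ) :
    (derivative^[j] (twistedDeriv a N p)).eval a = (N - j) * (derivative^[j] p).eval a := by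
  simp [iterate_derivative_twistedDeriv]

theorem strictMonoOn_eval_div_pow {b : ℝ}
    (h : ∀ x ∈ Ioo b a, 0 < (twistedDeriv a N p).eval x) :
    StrictMonoOn (fun x => p.eval x / (a - x) ^ N) (Ico b a) := by
  refine strictMonoOn_of_deriv_pos (convex_Ico b a) (fun x hx => ?_) fun x hx => ?_
  · exact (hasDerivAt_eval_div_pow hx.2.ne).continuousAt.continuousWithinAt
  · rw [interior_Ico] at hx
    rw [(hasDerivAt_eval_div_pow hx.2.ne).deriv]
    exact div_pos (h x hx) (pow_pos (sub_pos.mpr hx.2) _)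

theorem eval_div_pow_eq_of_twistedDeriv_eq_zero (h : twistedDeriv a N p = 0) {x y : ℝ}
    (hx : x < a) (hy : y < a) : p.eval x / (a - x) ^ N = p.eval y / (a - y) ^ N :=
  isOpen_Iio.is_const_of_deriv_eq_zero isPreconnected_Iio
    (fun z hz => (hasDerivAt_eval_div_pow (ne_of_lt hz)).differentiableAt.differentiableWithinAt)
    (fun z hz => by simp [(hasDerivAt_eval_div_pow (ne_of_lt hz)).deriv, h]) hx hy

theorem pos_on_Ioo_or_eq_zero_of_twistedDeriv {b : ℝ} (hba : b < a) (hpb : 0 ≤ p.eval b)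
    (hq : (∀ x ∈ Ioo b a, 0 < (twistedDeriv a N p).eval x) ∨ twistedDeriv a N p = 0) :
    (∀ x ∈ Ioo b a, 0 < p.eval x) ∨ p = 0 := by
  have hpos_of_div : ∀ x ∈ Ioo b a, 0 < p.eval x / (a - x) ^ N → 0 < p.eval x := fun x hx =>
    (div_pos_iff_of_pos_right (pow_pos (sub_pos.mpr hx.2) N)).mp
  have hb : 0 ≤ p.eval b / (a - b) ^ N := div_nonneg hpb (pow_nonneg (sub_pos.mpr hba).le N)
  rcases hq with hq | hq
  · refine Or.inl fun x hx => hpos_of_div x hx (hb.trans_lt ?_)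
    exact strictMonoOn_eval_div_pow hq (left_mem_Ico.mpr hba) (Ioo_subset_Ico_self hx) hx.1
  have hconst : ∀ x < a, p.eval x / (a - x) ^ N = p.eval b / (a - b) ^ N :=
    fun x hx => eval_div_pow_eq_of_twistedDeriv_eq_zero hq hx hba
  rcases hb.lt_or_eq with hb | hb
  · exact Or.inl fun x hx => hpos_of_div x hx (hconst x hx.2 ▸ hb)
  refine Or.inr (eq_zero_of_infinite_isRoot p ((Iio_infinite a).mono fun x hx => ?_))
  have := (hconst x hx).trans hb.symm
  rw [div_eq_zero_iff] at this
  exact this.resolve_right (pow_ne_zero N (sub_ne_zero.mpr (ne_of_gt hx)))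

theorem pos_left_or_eq_zero_of_alternating_iterate_derivative {k : ℕ} (hdeg : p.degree < k)
    (h : ∀ j < k, 0 ≤ (-1) ^ j * (derivative^[j] p).eval a) :
    (∀ x < a, 0 < p.eval x) ∨ p = 0 := by
  induction k generalizing p with
  | zero => exact Or.inr (by simpa using hdeg)
  | succ k ih =>
    have hpa : 0 ≤ p.eval a := by simpa using h 0 k.succ_pos
    have h' : ∀ j < k, 0 ≤ (-1) ^ j * (derivative^[j] (-derivative p)).eval a := fun j hj => by
      have := h (j + 1) (by omega)
      rw [Function.iterate_succ_apply, pow_succ] at this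
      simpa [iterate_derivative_neg] using this
    rcases ih (by simpa using degree_derivative_lt_of_degree_lt_succ hdeg) h' with hneg | hzero
    · have hanti : StrictAntiOn (fun x => p.eval x) (Iic a) := by
        refine strictAntiOn_of_deriv_neg (convex_Iic a) p.continuousOn fun x hx => ?_
        rw [interior_Iic] at hx
        simpa [Polynomial.deriv] using hneg x hx
      exact Or.inl fun x hx => hpa.trans_lt (hanti hx.le (mem_Iic.mpr le_rfl) hx)
    · rw [eq_C_of_derivative_eq_zero (neg_eq_zero.mp hzero)] at hpa ⊢
      rw [eval_C] at hpa
      rcases hpa.lt_or_eq with hc | hc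
      · exact Or.inl fun x _ => by simpa using hc
      · exact Or.inr (by simp [← hc])

-- `degree` rather than `natDegree`, so that `degree 0 = ⊥ < 0` and the induction can start at `0`.
theorem pos_on_Ioo_or_eq_zero_of_hermite_signs {x₀ x₁ : ℝ} (hx : x₀ < x₁) {k₀ k₁ : ℕ}
    (hdeg : p.degree < ↑(k₀ + k₁))
    (h0 : ∀ j < k₀, 0 ≤ (derivative^[j] p).eval x₀)
    (h1 : ∀ j < k₁, 0 ≤ (-1) ^ j * (derivative^[j] p).eval x₁) :
    (∀ x ∈ Ioo x₀ x₁, 0 < p.eval x) ∨ p = 0 := by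
  induction k₀ generalizing p with
  | zero =>
    rcases pos_left_or_eq_zero_of_alternating_iterate_derivative (by simpa using hdeg) h1 with
      hpos | hzero
    · exact Or.inl fun x hx => hpos x hx.2
    · exact Or.inr hzero
  | succ k₀ ih =>
    have hdeg' : p.degree ≤ ↑(k₀ + k₁) :=
      Order.le_of_lt_succ (by rwa [show k₀ + 1 + k₁ = k₀ + k₁ + 1 by omega] at hdeg)
    have hq0 : ∀ j < k₀, 0 ≤ (derivative^[j] (twistedDeriv x₁ (k₀ + k₁) p)).eval x₀ :=
      fun j hj => eval_iterate_derivative_twistedDeriv_nonneg hx.le (by omega)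
        (h0 (j + 1) (by omega)) (h0 j (by omega))
    have hq1 : ∀ j < k₁,
        0 ≤ (-1) ^ j * (derivative^[j] (twistedDeriv x₁ (k₀ + k₁) p)).eval x₁ := fun j hj => by
      rw [eval_iterate_derivative_twistedDeriv_self, mul_left_comm]
      exact mul_nonneg (sub_nonneg.mpr (by exact_mod_cast (by omega : j ≤ k₀ + k₁))) (h1 j hj)
    exact pos_on_Ioo_or_eq_zero_of_twistedDeriv hx (by simpa using h0 0 k₀.succ_pos)
      (ih (degree_twistedDeriv_lt hdeg') hq0 hq1)

end Polynomial

/-- **Lemma (positivity of two-point Hermite interpolation).** Let `p` be a real polynomial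
of degree at most `m₀ + m₁ + 1` with `p⁽ʲ⁾(x₀) = y₀ⱼ` for `j ≤ m₀` and `p⁽ʲ⁾(x₁) = y₁ⱼ`
for `j ≤ m₁`, where `x₀ < x₁`. If `y₀ⱼ ≥ 0` for all `j ≤ m₀` and `(−1)ʲ y₁ⱼ ≥ 0` for all
`j ≤ m₁`, then either `p > 0` on `(x₀, x₁)`, or all `yᵢⱼ` vanish and `p = 0`. -/
theorem hermite_interpolation_positivity
    (m₀ m₁ : ℕ) (x₀ x₁ : ℝ) (hx : x₀ < x₁)
    (y₀ y₁ : ℕ → ℝ) (p : Polynomial ℝ)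
    (hdeg : p.natDegree ≤ m₀ + m₁ + 1)
    (h0 : ∀ j ≤ m₀, (Polynomial.derivative^[j] p).eval x₀ = y₀ j)
    (h1 : ∀ j ≤ m₁, (Polynomial.derivative^[j] p).eval x₁ = y₁ j)
    (hy0 : ∀ j ≤ m₀, 0 ≤ y₀ j)
    (hy1 : ∀ j ≤ m₁, 0 ≤ (-1 : ℝ) ^ j * y₁ j) :
    (∀ x ∈ Set.Ioo x₀ x₁, 0 < p.eval x) ∨
      ((∀ j ≤ m₀, y₀ j = 0) ∧ (∀ j ≤ m₁, y₁ j = 0) ∧ p = 0) := by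
  have hdeg' : p.degree < ↑((m₀ + 1) + (m₁ + 1)) :=
    (degree_lt_iff_coeff_zero _ _).mpr fun m hm => coeff_eq_zero_of_natDegree_lt (by omega)
  rcases pos_on_Ioo_or_eq_zero_of_hermite_signs hx hdeg'
      (fun j hj => h0 j (by omega) ▸ hy0 j (by omega))
      (fun j hj => h1 j (by omega) ▸ hy1 j (by omega)) with hpos | rfl
  · exact Or.inl hpos
  · exact Or.inr ⟨fun j hj => by simp [← h0 j hj], fun j hj => by simp [← h1 j hj], rfl⟩
end

section
/- Let I ⊆ ℝ be an interval, let s, t ∈ I with s ≠ t, and let f : I → ℝ be twice differentiable with f(s) = f′(s) = f(t) = f′(t) = 0 and with f″ convex on I. Then f ≥ 0 on I. If moreover u ∈ I \ {s,t} satisfies f(u) = 0, then f = 0 on the convex hull of {s, t, u}. -/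
open Set Topology

lemma osc_ioo_sub_int {I : Set ℝ} (hI : Convex ℝ I) {a b : ℝ} (ha : a ∈ I) (hb : b ∈ I) :
    Ioo a b ⊆ interior I := fun y hy =>
  mem_interior_iff_mem_nhds.2 (Filter.mem_of_superset (Icc_mem_nhds hy.1 hy.2)
    (hI.ordConnected.out ha hb))

lemma osc_mono_aux {I : Set ℝ} (hI : Convex ℝ I) {f f' : ℝ → ℝ}
    (hd : ∀ x ∈ I, HasDerivWithinAt f (f' x) I x) {D : Set ℝ} (hDI : D ⊆ I) (hD : Convex ℝ D)
    (hsign : ∀ x ∈ interior D, 0 ≤ f' x) : MonotoneOn f D := by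
  have hder : ∀ x ∈ interior D, HasDerivAt f (f' x) x := fun x hx =>
    (hd x (hDI (interior_subset hx))).hasDerivAt
      (mem_interior_iff_mem_nhds.1 ((interior_mono hDI) hx))
  exact monotoneOn_of_deriv_nonneg hD
    (fun x hx => ((hd x (hDI hx)).continuousWithinAt).mono hDI)
    (fun x hx => ((hder x hx).differentiableAt).differentiableWithinAt)
    (fun x hx => by rw [(hder x hx).deriv]; exact hsign x hx)

lemma osc_anti_aux {I : Set ℝ} (hI : Convex ℝ I) {f f' : ℝ → ℝ}
    (hd : ∀ x ∈ I, HasDerivWithinAt f (f' x) I x) {D : Set ℝ} (hDI : D ⊆ I) (hD : Convex ℝ D)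
    (hsign : ∀ x ∈ interior D, f' x ≤ 0) : AntitoneOn f D := by
  have hder : ∀ x ∈ interior D, HasDerivAt f (f' x) x := fun x hx =>
    (hd x (hDI (interior_subset hx))).hasDerivAt
      (mem_interior_iff_mem_nhds.1 ((interior_mono hDI) hx))
  exact antitoneOn_of_deriv_nonpos hD
    (fun x hx => ((hd x (hDI hx)).continuousWithinAt).mono hDI)
    (fun x hx => ((hder x hx).differentiableAt).differentiableWithinAt)
    (fun x hx => by rw [(hder x hx).deriv]; exact hsign x hx)

lemma osc_conv_three {I : Set ℝ} {g : ℝ → ℝ} (hg : ConvexOn ℝ I g)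
    {a b c : ℝ} (ha : a ∈ I) (hb : b ∈ I) (hc : c ∈ I) (hab : a < b) (hbc : b < c)
    (h0a : g a = 0) (h0b : g b = 0) (h0c : g c = 0) :
    ∀ y ∈ I, 0 ≤ g y := by
  intro y hy
  rcases lt_trichotomy y b with h | h | h
  · have hmem : b ∈ openSegment ℝ y c := by
      rw [openSegment_eq_Ioo (h.trans hbc)]; exact ⟨h, hbc⟩
    have h2 := hg.le_left_of_right_le hy hc hmem (by rw [h0c, h0b])
    rwa [h0b] at h2
  · rw [h, h0b]
  · have hmem : b ∈ openSegment ℝ a y := by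
      rw [openSegment_eq_Ioo (hab.trans h)]; exact ⟨hab, h⟩
    have h2 := hg.le_right_of_left_le ha hy hmem (by rw [h0a, h0b])
    rwa [h0b] at h2

lemma osc_conv_outside {I : Set ℝ} {g : ℝ → ℝ} (hg : ConvexOn ℝ I g)
    {a b : ℝ} (ha : a ∈ I) (hb : b ∈ I) (hab : a < b)
    (h0a : g a = 0) (h0b : g b = 0) :
    ∀ y ∈ I, y ≤ a ∨ b ≤ y → 0 ≤ g y := by
  intro y hy hcase
  rcases hcase with h | h
  · rcases eq_or_lt_of_le h with h' | h'
    · rw [h', h0a]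
    · have hmem : a ∈ openSegment ℝ y b := by
        rw [openSegment_eq_Ioo (h'.trans hab)]; exact ⟨h', hab⟩
      have h2 := hg.le_left_of_right_le hy hb hmem (by rw [h0a, h0b])
      rwa [h0a] at h2
  · rcases eq_or_lt_of_le h with h' | h'
    · rw [← h', h0b]
    · have hmem : b ∈ openSegment ℝ a y := by
        rw [openSegment_eq_Ioo (hab.trans h')]; exact ⟨hab, h'⟩
      have h2 := hg.le_right_of_left_le ha hy hmem (by rw [h0a, h0b])
      rwa [h0b] at h2

lemma osc_zero_deriv {I : Set ℝ} {f f' : ℝ → ℝ}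
    (hd : ∀ x ∈ I, HasDerivWithinAt f (f' x) I x)
    {U : Set ℝ} (hU : U ⊆ I) (hf0 : ∀ y ∈ U, f y = 0) {y : ℝ} (hy : U ∈ 𝓝 y) (hyI : y ∈ I) :
    f' y = 0 := by
  have h1 : HasDerivAt f (f' y) y := (hd y hyI).hasDerivAt (Filter.mem_of_superset hy hU)
  have h2 : HasDerivAt f 0 y :=
    (hasDerivAt_const y (0:ℝ)).congr_of_eventuallyEq
      (Filter.eventuallyEq_of_mem hy fun z hz => hf0 z hz)
  exact h1.unique h2

lemma osc_aux (I : Set ℝ) (hI : Convex ℝ I)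
    (s t : ℝ) (hs : s ∈ I) (ht : t ∈ I) (hst : s < t)
    (f f' f'' : ℝ → ℝ)
    (hd1 : ∀ x ∈ I, HasDerivWithinAt f (f' x) I x)
    (hd2 : ∀ x ∈ I, HasDerivWithinAt f' (f'' x) I x)
    (hconv : ConvexOn ℝ I f'')
    (h0 : f s = 0) (h1 : f' s = 0) (h2 : f t = 0) (h3 : f' t = 0) :
    (∀ x ∈ I, 0 ≤ f x) ∧
      ∀ u ∈ I, u ≠ s → u ≠ t → f u = 0 →
        ∀ x ∈ convexHull ℝ ({s, t, u} : Set ℝ), f x = 0 := by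
  have hIsub : ∀ a b : ℝ, a ∈ I → b ∈ I → Icc a b ⊆ I := fun a b ha hb =>
    hI.ordConnected.out ha hb
  -- Rolle
  have rolle : ∀ (h h' : ℝ → ℝ), (∀ x ∈ I, HasDerivWithinAt h (h' x) I x) →
      ∀ a b : ℝ, a ∈ I → b ∈ I → a < b → h a = h b → ∃ c ∈ Ioo a b, h' c = 0 := by
    intro h h' hd a b ha hb hab heq
    refine exists_hasDerivAt_eq_zero hab ?_ heq ?_
    · exact fun x hx => ((hd x (hIsub a b ha hb hx)).continuousWithinAt).mono (hIsub a b ha hb)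
    · intro x hx
      exact (hd x (hIsub a b ha hb (Ioo_subset_Icc_self hx))).hasDerivAt
        (mem_interior_iff_mem_nhds.1 (osc_ioo_sub_int hI ha hb hx))
  obtain ⟨c, hc, hc0⟩ := rolle f f' hd1 s t hs ht hst (h0.trans h2.symm)
  have hcI : c ∈ I := hIsub s t hs ht ⟨hc.1.le, hc.2.le⟩
  obtain ⟨ξ1, hξ1, hgξ1⟩ := rolle f' f'' hd2 s c hs hcI hc.1 (h1.trans hc0.symm)
  obtain ⟨ξ2, hξ2, hgξ2⟩ := rolle f' f'' hd2 c t hcI ht hc.2 (hc0.trans h3.symm)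
  have hξ1I : ξ1 ∈ I := hIsub s c hs hcI ⟨hξ1.1.le, hξ1.2.le⟩
  have hξ2I : ξ2 ∈ I := hIsub c t hcI ht ⟨hξ2.1.le, hξ2.2.le⟩
  have hsξ1 : s < ξ1 := hξ1.1
  have hξ12 : ξ1 < ξ2 := hξ1.2.trans hξ2.1
  have hξ2t : ξ2 < t := hξ2.2
  have hξ1t : ξ1 < t := hξ12.trans hξ2t
  have hsξ2 : s < ξ2 := hsξ1.trans hξ12
  -- sign of f''
  have hglow : ∀ y ∈ Icc ξ1 ξ2, f'' y ≤ 0 := by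
    intro y hy
    have h := hconv.le_on_segment hξ1I hξ2I (by rw [segment_eq_Icc hξ12.le]; exact hy)
    simpa [hgξ1, hgξ2] using h
  have hghigh : ∀ y ∈ I, y ≤ ξ1 ∨ ξ2 ≤ y → 0 ≤ f'' y :=
    osc_conv_outside hconv hξ1I hξ2I hξ12 hgξ1 hgξ2
  -- monotonicity of f'
  have hm1 : MonotoneOn f' (I ∩ Iic ξ1) :=
    osc_mono_aux hI hd2 inter_subset_left (hI.inter (convex_Iic _)) fun y hy =>
      hghigh y (interior_subset hy).1 (Or.inl (interior_subset hy).2)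
  have ha2 : AntitoneOn f' (Icc ξ1 ξ2) :=
    osc_anti_aux hI hd2 (hIsub ξ1 ξ2 hξ1I hξ2I) (convex_Icc _ _) fun y hy =>
      hglow y (interior_subset hy)
  have hm3 : MonotoneOn f' (I ∩ Ici ξ2) :=
    osc_mono_aux hI hd2 inter_subset_left (hI.inter (convex_Ici _)) fun y hy =>
      hghigh y (interior_subset hy).1 (Or.inr (interior_subset hy).2)
  -- part 1
  have part1 : ∀ x ∈ I, 0 ≤ f x := by
    intro x hx
    rcases le_or_gt x s with hxs | hxs
    · have haf : AntitoneOn f (I ∩ Iic s) :=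
        osc_anti_aux hI hd1 inter_subset_left (hI.inter (convex_Iic _)) fun y hy => by
          have hyD := interior_subset hy
          have h := hm1 ⟨hyD.1, le_trans hyD.2 hsξ1.le⟩ ⟨hs, hsξ1.le⟩ hyD.2
          rwa [h1] at h
      have h := haf ⟨hx, hxs⟩ ⟨hs, le_refl s⟩ hxs
      rwa [h0] at h
    · rcases le_or_gt t x with htx | htx
      · have hmf : MonotoneOn f (I ∩ Ici t) :=
          osc_mono_aux hI hd1 inter_subset_left (hI.inter (convex_Ici _)) fun y hy => by
            have hyD := interior_subset hy
            have h := hm3 ⟨ht, hξ2t.le⟩ ⟨hyD.1, hξ2t.le.trans hyD.2⟩ hyD.2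
            rwa [h3] at h
        have h := hmf ⟨ht, le_refl t⟩ ⟨hx, htx⟩ htx
        rwa [h2] at h
      · -- s < x < t
        rcases le_or_gt x ξ1 with hxξ | hξ1x
        · have hmf : MonotoneOn f (Icc s x) :=
            osc_mono_aux hI hd1 (hIsub s x hs hx) (convex_Icc _ _) fun y hy => by
              rw [interior_Icc] at hy
              have hyI : y ∈ I := hIsub s x hs hx (Ioo_subset_Icc_self hy)
              have h := hm1 ⟨hs, hsξ1.le⟩ ⟨hyI, hy.2.le.trans hxξ⟩ hy.1.le
              rwa [h1] at h
          have h := hmf ⟨le_refl s, hxs.le⟩ ⟨hxs.le, le_refl x⟩ hxs.le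
          rwa [h0] at h
        · rcases le_or_gt ξ2 x with hξ2x | hxξ2
          · have haf : AntitoneOn f (Icc x t) :=
              osc_anti_aux hI hd1 (hIsub x t hx ht) (convex_Icc _ _) fun y hy => by
                rw [interior_Icc] at hy
                have hyI : y ∈ I := hIsub x t hx ht (Ioo_subset_Icc_self hy)
                have h := hm3 ⟨hyI, hξ2x.trans hy.1.le⟩ ⟨ht, hξ2t.le⟩ hy.2.le
                rwa [h3] at h
            have h := haf ⟨le_refl x, htx.le⟩ ⟨htx.le, le_refl t⟩ htx.le
            rwa [h2] at h
          · rcases le_or_gt 0 (f' x) with hfx | hfx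
            · have hmf : MonotoneOn f (Icc s x) :=
                osc_mono_aux hI hd1 (hIsub s x hs hx) (convex_Icc _ _) fun y hy => by
                  rw [interior_Icc] at hy
                  have hyI : y ∈ I := hIsub s x hs hx (Ioo_subset_Icc_self hy)
                  rcases le_or_gt y ξ1 with hyξ | hyξ
                  · have h := hm1 ⟨hs, hsξ1.le⟩ ⟨hyI, hyξ⟩ hy.1.le
                    rwa [h1] at h
                  · have h := ha2 ⟨hyξ.le, hy.2.le.trans hxξ2.le⟩ ⟨hξ1x.le, hxξ2.le⟩ hy.2.le
                    exact le_trans hfx h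
              have h := hmf ⟨le_refl s, hxs.le⟩ ⟨hxs.le, le_refl x⟩ hxs.le
              rwa [h0] at h
            · have haf : AntitoneOn f (Icc x t) :=
                osc_anti_aux hI hd1 (hIsub x t hx ht) (convex_Icc _ _) fun y hy => by
                  rw [interior_Icc] at hy
                  have hyI : y ∈ I := hIsub x t hx ht (Ioo_subset_Icc_self hy)
                  rcases le_or_gt y ξ2 with hyξ | hyξ
                  · have h := ha2 ⟨hξ1x.le, hxξ2.le⟩ ⟨hξ1x.le.trans hy.1.le, hyξ⟩ hy.1.le
                    exact le_trans h hfx.le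
                  · have h := hm3 ⟨hyI, hyξ.le⟩ ⟨ht, hξ2t.le⟩ hy.2.le
                    rwa [h3] at h
              have h := haf ⟨le_refl x, htx.le⟩ ⟨htx.le, le_refl t⟩ htx.le
              rwa [h2] at h
  refine ⟨part1, ?_⟩
  -- part 2
  intro u huI hus hut hfu x hxhull
  -- three zeros of f''
  obtain ⟨a, b, d, haI, hbI, hdI, hab, hbd, h0a, h0b, h0d⟩ :
      ∃ a b d : ℝ, a ∈ I ∧ b ∈ I ∧ d ∈ I ∧ a < b ∧ b < d ∧
        f'' a = 0 ∧ f'' b = 0 ∧ f'' d = 0 := by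
    rcases lt_trichotomy u s with hus' | h | hsu
    · -- u < s : f vanishes on [u,s]
      have haf : AntitoneOn f (Icc u s) :=
        osc_anti_aux hI hd1 (hIsub u s huI hs) (convex_Icc _ _) fun y hy => by
          rw [interior_Icc] at hy
          have hyI : y ∈ I := hIsub u s huI hs (Ioo_subset_Icc_self hy)
          have h := hm1 ⟨hyI, (hy.2.trans hsξ1).le⟩ ⟨hs, hsξ1.le⟩ hy.2.le
          rwa [h1] at h
      have hf0 : ∀ y ∈ Icc u s, f y = 0 := fun y hy =>
        le_antisymm (hfu ▸ haf ⟨le_refl u, hus'.le⟩ hy hy.1)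
          (h0 ▸ haf hy ⟨hus'.le, le_refl s⟩ hy.2)
      have hf'0 : ∀ y ∈ Ioo u s, f' y = 0 := fun y hy =>
        osc_zero_deriv hd1 (hIsub u s huI hs) hf0 (Icc_mem_nhds hy.1 hy.2)
          (hIsub u s huI hs (Ioo_subset_Icc_self hy))
      set p := (u + s) / 2 with hp
      have hpmem : p ∈ Ioo u s := ⟨by rw [hp]; linarith, by rw [hp]; linarith⟩
      have hpI : p ∈ I := hIsub u s huI hs (Ioo_subset_Icc_self hpmem)
      have hgp : f'' p = 0 :=
        osc_zero_deriv hd2 (fun y hy => hIsub u s huI hs (Ioo_subset_Icc_self hy)) hf'0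
          (isOpen_Ioo.mem_nhds hpmem) hpI
      exact ⟨p, ξ1, ξ2, hpI, hξ1I, hξ2I, hpmem.2.trans hsξ1, hξ12, hgp, hgξ1, hgξ2⟩
    · exact absurd h hus
    · rcases lt_trichotomy u t with hut' | h | htu
      · -- s < u < t : interior minimum
        have hnb : I ∈ 𝓝 u :=
          Filter.mem_of_superset (Icc_mem_nhds hsu hut') (hIsub s t hs ht)
        have hmin : IsLocalMin f u := by
          filter_upwards [hnb] with y hy
          rw [hfu]; exact part1 y hy
        have hf'u : f' u = 0 := hmin.hasDerivAt_eq_zero ((hd1 u huI).hasDerivAt hnb)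
        obtain ⟨c1, hc1, hc10⟩ := rolle f f' hd1 s u hs huI hsu (h0.trans hfu.symm)
        have hc1I : c1 ∈ I := hIsub s u hs huI ⟨hc1.1.le, hc1.2.le⟩
        obtain ⟨η1, hη1, hgη1⟩ := rolle f' f'' hd2 s c1 hs hc1I hc1.1 (h1.trans hc10.symm)
        obtain ⟨c2, hc2, hc20⟩ := rolle f f' hd1 u t huI ht hut' (hfu.trans h2.symm)
        have hc2I : c2 ∈ I := hIsub u t huI ht ⟨hc2.1.le, hc2.2.le⟩
        obtain ⟨η3, hη3, hgη3⟩ := rolle f' f'' hd2 u c2 huI hc2I hc2.1 (hf'u.trans hc20.symm)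
        obtain ⟨η4, hη4, hgη4⟩ := rolle f' f'' hd2 c2 t hc2I ht hc2.2 (hc20.trans h3.symm)
        have hη1I : η1 ∈ I := hIsub s c1 hs hc1I ⟨hη1.1.le, hη1.2.le⟩
        have hη3I : η3 ∈ I := hIsub u c2 huI hc2I ⟨hη3.1.le, hη3.2.le⟩
        have hη4I : η4 ∈ I := hIsub c2 t hc2I ht ⟨hη4.1.le, hη4.2.le⟩
        exact ⟨η1, η3, η4, hη1I, hη3I, hη4I,
          lt_trans (hη1.2.trans hc1.2) hη3.1, hη3.2.trans hη4.1, hgη1, hgη3, hgη4⟩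
      · exact absurd h hut
      · -- t < u : f vanishes on [t,u]
        have hmf : MonotoneOn f (Icc t u) :=
          osc_mono_aux hI hd1 (hIsub t u ht huI) (convex_Icc _ _) fun y hy => by
            rw [interior_Icc] at hy
            have hyI : y ∈ I := hIsub t u ht huI (Ioo_subset_Icc_self hy)
            have h := hm3 ⟨ht, hξ2t.le⟩ ⟨hyI, hξ2t.le.trans hy.1.le⟩ hy.1.le
            rwa [h3] at h
        have hf0 : ∀ y ∈ Icc t u, f y = 0 := fun y hy =>
          le_antisymm (hfu ▸ hmf hy ⟨htu.le, le_refl u⟩ hy.2)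
            (h2 ▸ hmf ⟨le_refl t, htu.le⟩ hy hy.1)
        have hf'0 : ∀ y ∈ Ioo t u, f' y = 0 := fun y hy =>
          osc_zero_deriv hd1 (hIsub t u ht huI) hf0 (Icc_mem_nhds hy.1 hy.2)
            (hIsub t u ht huI (Ioo_subset_Icc_self hy))
        set p := (t + u) / 2 with hp
        have hpmem : p ∈ Ioo t u := ⟨by rw [hp]; linarith, by rw [hp]; linarith⟩
        have hpI : p ∈ I := hIsub t u ht huI (Ioo_subset_Icc_self hpmem)
        have hgp : f'' p = 0 :=
          osc_zero_deriv hd2 (fun y hy => hIsub t u ht huI (Ioo_subset_Icc_self hy)) hf'0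
            (isOpen_Ioo.mem_nhds hpmem) hpI
        exact ⟨ξ1, ξ2, p, hξ1I, hξ2I, hpI, hξ12, hξ2t.trans hpmem.1, hgξ1, hgξ2, hgp⟩
  -- f'' ≥ 0 on I, f' monotone on I
  have hgpos : ∀ y ∈ I, 0 ≤ f'' y := osc_conv_three hconv haI hbI hdI hab hbd h0a h0b h0d
  have hm : MonotoneOn f' I := osc_mono_aux hI hd2 (subset_refl I) hI fun y hy =>
    hgpos y (interior_subset hy)
  -- f' vanishes on [s,t]
  have hf'st : ∀ y ∈ Icc s t, f' y = 0 := fun y hy => by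
    have hyI : y ∈ I := hIsub s t hs ht hy
    have hl := hm hs hyI hy.1
    have hr := hm hyI ht hy.2
    rw [h1] at hl; rw [h3] at hr; linarith
  -- f vanishes on [s,t]
  have hfst : ∀ y ∈ Icc s t, f y = 0 := by
    have hmf : MonotoneOn f (Icc s t) :=
      osc_mono_aux hI hd1 (hIsub s t hs ht) (convex_Icc _ _) fun y hy => by
        rw [interior_Icc] at hy
        exact (hf'st y (Ioo_subset_Icc_self hy)).ge
    have haf : AntitoneOn f (Icc s t) :=
      osc_anti_aux hI hd1 (hIsub s t hs ht) (convex_Icc _ _) fun y hy => by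
        rw [interior_Icc] at hy
        exact (hf'st y (Ioo_subset_Icc_self hy)).le
    intro y hy
    have hl := hmf ⟨le_refl s, hst.le⟩ hy hy.1
    have hr := haf ⟨le_refl s, hst.le⟩ hy hy.1
    rw [h0] at hl hr; linarith
  -- hull bounds
  set lo := min u s with hlo
  set hi := max u t with hhi
  have hlos : lo ≤ s := min_le_right _ _
  have hthi : t ≤ hi := le_max_right _ _
  have hloI : lo ∈ I := by
    rcases le_total u s with h | h
    · rw [hlo, min_eq_left h]; exact huI
    · rw [hlo, min_eq_right h]; exact hs
  have hhiI : hi ∈ I := by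
    rcases le_total u t with h | h
    · rw [hhi, max_eq_right h]; exact ht
    · rw [hhi, max_eq_left h]; exact huI
  have hflo : f lo = 0 := by
    rcases le_total u s with h | h
    · rw [hlo, min_eq_left h]; exact hfu
    · rw [hlo, min_eq_right h]; exact h0
  have hfhi : f hi = 0 := by
    rcases le_total u t with h | h
    · rw [hhi, max_eq_right h]; exact h2
    · rw [hhi, max_eq_left h]; exact hfu
  have hxmem : x ∈ Icc lo hi := by
    refine convexHull_min ?_ (convex_Icc lo hi) hxhull
    intro z hz
    simp only [mem_insert_iff, mem_singleton_iff] at hz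
    rcases hz with rfl | rfl | rfl
    · exact ⟨hlos, hst.le.trans hthi⟩
    · exact ⟨hlos.trans hst.le, hthi⟩
    · exact ⟨min_le_left _ _, le_max_left _ _⟩
  have hxI : x ∈ I := hIsub lo hi hloI hhiI hxmem
  rcases le_or_gt x s with hxs | hxs
  · -- x ∈ [lo, s]
    have haf : AntitoneOn f (I ∩ Iic s) :=
      osc_anti_aux hI hd1 inter_subset_left (hI.inter (convex_Iic _)) fun y hy => by
        have hyD := interior_subset hy
        have h := hm hyD.1 hs hyD.2
        rwa [h1] at h
    have hl := haf ⟨hloI, hlos⟩ ⟨hxI, hxs⟩ hxmem.1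
    have hr := haf ⟨hxI, hxs⟩ ⟨hs, le_refl s⟩ hxs
    rw [hflo] at hl; rw [h0] at hr; linarith
  · rcases le_or_gt x t with hxt | hxt
    · exact hfst x ⟨hxs.le, hxt⟩
    · have hmf : MonotoneOn f (I ∩ Ici t) :=
        osc_mono_aux hI hd1 inter_subset_left (hI.inter (convex_Ici _)) fun y hy => by
          have hyD := interior_subset hy
          have h := hm ht hyD.1 hyD.2
          rwa [h3] at h
      have hl := hmf ⟨ht, le_refl t⟩ ⟨hxI, hxt.le⟩ hxt.le
      have hr := hmf ⟨hxI, hxt.le⟩ ⟨hhiI, hxt.le.trans hxmem.2⟩ hxmem.2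
      rw [h2] at hl; rw [hfhi] at hr; linarith

/-- **Lemma (osculatory interpolation by zero).** Let `I ⊆ ℝ` be an interval (a convex
set), `s, t ∈ I` with `s ≠ t`, and `f` twice differentiable on `I` (with derivatives `f'`
and `f''` within `I`) such that `f(s) = f'(s) = f(t) = f'(t) = 0` and `f''` is convex on
`I`. Then `f ≥ 0` on `I`, and if moreover `u ∈ I \ {s,t}` satisfies `f(u) = 0`, then
`f = 0` on the convex hull of `{s, t, u}`. -/
theorem osculatory_nonneg (I : Set ℝ) (hI : Convex ℝ I)
    (s t : ℝ) (hs : s ∈ I) (ht : t ∈ I) (hst : s ≠ t)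
    (f f' f'' : ℝ → ℝ)
    (hd1 : ∀ x ∈ I, HasDerivWithinAt f (f' x) I x)
    (hd2 : ∀ x ∈ I, HasDerivWithinAt f' (f'' x) I x)
    (hconv : ConvexOn ℝ I f'')
    (h0 : f s = 0) (h1 : f' s = 0) (h2 : f t = 0) (h3 : f' t = 0) :
    (∀ x ∈ I, 0 ≤ f x) ∧
      ∀ u ∈ I, u ≠ s → u ≠ t → f u = 0 →
        ∀ x ∈ convexHull ℝ ({s, t, u} : Set ℝ), f x = 0 := by
  rcases hst.lt_or_gt with h | h
  · exact osc_aux I hI s t hs ht h f f' f'' hd1 hd2 hconv h0 h1 h2 h3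
  · have H := osc_aux I hI t s ht hs h f f' f'' hd1 hd2 hconv h2 h3 h0 h1
    refine ⟨H.1, fun u hu hus hut hfu x hx => H.2 u hu hut hus hfu x ?_⟩
    rwa [Set.insert_comm] at hx
end

section
/- Let r ∈ ℝ \ {0} and let u > v ≥ 0 with v ≤ |r|. Set W := (u − v)(u² + 4uv + v²), a := |r|³ + 4u³v³/W, b := −sgn(r)·(3r² + 6u²v²/(u² + 4uv + v²)), c := 3|r| − 12u²v²/W, and d := (u + v)³/W. Then for every x ∈ ℝ one has |x − r|³ ≤ a + b·x + c·x² + d·|x|³, with equality at x = −u·sgn(r) and at x = v·sgn(r). Consequently, for every probability measure P on ℝ with finite third absolute moment, ∫ |x − r|³ dP(x) ≤ a + b·∫ x dP(x) + c·∫ x² dP(x) + d·∫ |x|³ dP(x). -/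
open MeasureTheory

/-!
Put `y = sign r * x` and `R = |r|`. Then `|x - r|³ = (R - y)³ + 2 max(y - R, 0)³`, while the
majorant `a + b x + c x² + d |x|³` equals `(R - y)³ + S(y)` with a slack `S` not involving `r`.
So everything reduces to `2 max(y - v, 0)³ ≤ S(y)`, the worst case `R = v`. Clearing the
denominator `W`, this follows from the factorizations
`W S(y) = 2 v² (y + u)² (2uv - (3u + v) y)` for `y ≤ 0` and
`W S(y) = 2 u² (y - v)² ((u + 3v) y + 2uv)` for `y ≥ 0`,
which also exhibit the equality points `y = -u` and `y = v`. The moment bound is the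
integrated pointwise bound.
-/

noncomputable def recenteringSlack (u v y : ℝ) : ℝ :=
  y ^ 3 + (4 * u ^ 3 * v ^ 3 - 6 * u ^ 2 * v ^ 2 * (u - v) * y - 12 * u ^ 2 * v ^ 2 * y ^ 2
    + (u + v) ^ 3 * |y| ^ 3) / ((u - v) * (u ^ 2 + 4 * u * v + v ^ 2))

section Slack

variable {u v : ℝ} (huv : v < u) (hv : 0 ≤ v)
include huv hv

lemma recenteringSlack_denom_pos : 0 < (u - v) * (u ^ 2 + 4 * u * v + v ^ 2) := by
  have hu : 0 < u := hv.trans_lt huv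
  exact mul_pos (sub_pos.mpr huv) (by positivity)

lemma recenteringSlack_of_nonpos {y : ℝ} (hy : y ≤ 0) :
    recenteringSlack u v y =
      2 * v ^ 2 * (y + u) ^ 2 * (2 * u * v - (3 * u + v) * y) /
        ((u - v) * (u ^ 2 + 4 * u * v + v ^ 2)) := by
  have hW := (recenteringSlack_denom_pos huv hv).ne'
  rw [recenteringSlack, abs_of_nonpos hy, eq_div_iff hW, add_mul, div_mul_cancel₀ _ hW]
  ring

lemma recenteringSlack_of_nonneg {y : ℝ} (hy : 0 ≤ y) :
    recenteringSlack u v y =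
      2 * u ^ 2 * (y - v) ^ 2 * ((u + 3 * v) * y + 2 * u * v) /
        ((u - v) * (u ^ 2 + 4 * u * v + v ^ 2)) := by
  have hW := (recenteringSlack_denom_pos huv hv).ne'
  rw [recenteringSlack, abs_of_nonneg hy, eq_div_iff hW, add_mul, div_mul_cancel₀ _ hW]
  ring

lemma recenteringSlack_neg_left_eq_zero : recenteringSlack u v (-u) = 0 := by
  rw [recenteringSlack_of_nonpos huv hv (by linarith)]
  simp

lemma recenteringSlack_right_eq_zero : recenteringSlack u v v = 0 := by
  rw [recenteringSlack_of_nonneg huv hv hv]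
  simp

lemma two_mul_max_sub_pow_three_le_recenteringSlack (y : ℝ) :
    2 * max (y - v) 0 ^ 3 ≤ recenteringSlack u v y := by
  have hu : 0 < u := hv.trans_lt huv
  have hW := recenteringSlack_denom_pos huv hv
  rcases le_total y 0 with hy | hy
  · rw [max_eq_right (by linarith), zero_pow three_ne_zero, mul_zero,
      recenteringSlack_of_nonpos huv hv hy]
    have : 0 ≤ 2 * u * v - (3 * u + v) * y := by nlinarith
    positivity
  rw [recenteringSlack_of_nonneg huv hv hy, le_div_iff₀ hW]
  rcases le_total y v with hyv | hyv
  · rw [max_eq_right (by linarith), zero_pow three_ne_zero, mul_zero, zero_mul]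
    positivity
  rw [max_eq_left (by linarith), ← sub_nonneg]
  have key : 2 * u ^ 2 * (y - v) ^ 2 * ((u + 3 * v) * y + 2 * u * v)
      - 2 * (y - v) ^ 3 * ((u - v) * (u ^ 2 + 4 * u * v + v ^ 2))
      = 2 * (y - v) ^ 2 * ((3 * u * v ^ 2 + v ^ 3) * (y - v) + 3 * u ^ 2 * v * (u + v)) := by
    ring
  rw [key]
  have : 0 ≤ y - v := by linarith
  positivity

end Slack

lemma abs_sub_pow_three_eq (y R : ℝ) : |y - R| ^ 3 = (R - y) ^ 3 + 2 * max (y - R) 0 ^ 3 := by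
  rcases le_total y R with h | h
  · rw [abs_of_nonpos (by linarith), max_eq_right (by linarith)]
    ring
  · rw [abs_of_nonneg (by linarith), max_eq_left (by linarith)]
    ring

lemma abs_sub_pow_three_le_add_recenteringSlack {u v R : ℝ} (huv : v < u) (hv : 0 ≤ v)
    (hvR : v ≤ R) (y : ℝ) : |y - R| ^ 3 ≤ (R - y) ^ 3 + recenteringSlack u v y := by
  have hmax : max (y - R) 0 ^ 3 ≤ max (y - v) 0 ^ 3 :=
    pow_le_pow_left₀ (le_max_right _ _) (max_le_max (by linarith) le_rfl) 3
  rw [abs_sub_pow_three_eq]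
  linarith [two_mul_max_sub_pow_three_le_recenteringSlack huv hv y]

lemma Real.sign_mul_sign_of_ne_zero {r : ℝ} (hr : r ≠ 0) : Real.sign r * Real.sign r = 1 := by
  rcases Real.sign_apply_eq_of_ne_zero r hr with h | h <;> rw [h] <;> norm_num

lemma Real.abs_sub_eq_abs_sign_mul_sub_abs {r : ℝ} (hr : r ≠ 0) (x : ℝ) :
    |x - r| = |(Real.sign r * x - |r|)| := by
  rcases hr.lt_or_gt with h | h
  · rw [Real.sign_of_neg h, abs_of_neg h, ← abs_neg]
    ring_nf
  · rw [Real.sign_of_pos h, abs_of_pos h, one_mul]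

lemma integral_le_of_le_cubic {P : Measure ℝ} [IsProbabilityMeasure P] {f : ℝ → ℝ}
    {a b c d : ℝ} (h3 : Integrable (fun x => |x| ^ 3) P) (hf : ∀ x, 0 ≤ f x)
    (hle : ∀ x, f x ≤ a + b * x + c * x ^ 2 + d * |x| ^ 3) :
    ∫ x, f x ∂P ≤ a + b * (∫ x, x ∂P) + c * (∫ x, x ^ 2 ∂P) + d * ∫ x, |x| ^ 3 ∂P := by
  have h3' : Integrable (fun x : ℝ => ‖x‖ ^ 3) P := by simpa only [Real.norm_eq_abs] using h3
  have h1 : Integrable (fun x : ℝ => x) P :=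
    (integrable_norm_iff aestronglyMeasurable_id).mp <| by
      simpa using integrable_norm_pow_of_le aestronglyMeasurable_id (by norm_num : 1 ≤ 3) h3'
  have h2 : Integrable (fun x : ℝ => x ^ 2) P := by
    simpa using integrable_norm_pow_of_le aestronglyMeasurable_id (by norm_num : 2 ≤ 3) h3'
  have i0 := integrable_const (μ := P) a
  have i1 := h1.const_mul b
  have i2 := h2.const_mul c
  have i3 := h3.const_mul d
  have i01 : Integrable (fun x => a + b * x) P := i0.add i1
  have i012 : Integrable (fun x => a + b * x + c * x ^ 2) P := i01.add i2
  calc ∫ x, f x ∂P ≤ ∫ x, (a + b * x + c * x ^ 2 + d * |x| ^ 3) ∂P :=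
        integral_mono_of_nonneg (.of_forall hf) (i012.add i3) (.of_forall hle)
    _ = _ := by
      rw [integral_add i012 i3, integral_add i01 i2, integral_add i0 i1,
        integral_const, integral_const_mul, integral_const_mul, integral_const_mul]
      simp

/-- **Lemma (absolute third moment recentering inequality).** For `r ≠ 0`, `u > v ≥ 0`
with `v ≤ |r|`, and the explicit coefficients `a, b, c, d`, one has
`|x − r|³ ≤ a + bx + cx² + d|x|³` for all `x ∈ ℝ`, with equality at `x = −u·sgn(r)` and
`x = v·sgn(r)`; consequently, for every probability measure `P` on `ℝ` with finite third
absolute moment, `∫|x − r|³ dP ≤ a + b∫x dP + c∫x² dP + d∫|x|³ dP`. -/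
theorem abs_cube_recentering (r u v : ℝ) (hr : r ≠ 0) (huv : v < u) (hv : 0 ≤ v)
    (hvr : v ≤ |r|) (W a b c d : ℝ)
    (hW : W = (u - v) * (u ^ 2 + 4 * u * v + v ^ 2))
    (ha : a = |r| ^ 3 + 4 * u ^ 3 * v ^ 3 / W)
    (hb : b = -Real.sign r * (3 * r ^ 2 + 6 * u ^ 2 * v ^ 2 / (u ^ 2 + 4 * u * v + v ^ 2)))
    (hc : c = 3 * |r| - 12 * u ^ 2 * v ^ 2 / W)
    (hd : d = (u + v) ^ 3 / W) :
    (∀ x : ℝ, |x - r| ^ 3 ≤ a + b * x + c * x ^ 2 + d * |x| ^ 3) ∧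
      |(-u * Real.sign r) - r| ^ 3 =
        a + b * (-u * Real.sign r) + c * (-u * Real.sign r) ^ 2 + d * |(-u * Real.sign r)| ^ 3 ∧
      |v * Real.sign r - r| ^ 3 =
        a + b * (v * Real.sign r) + c * (v * Real.sign r) ^ 2 + d * |v * Real.sign r| ^ 3 ∧
      ∀ P : Measure ℝ, IsProbabilityMeasure P → Integrable (fun x => |x| ^ 3) P →
        (∫ x, |x - r| ^ 3 ∂P) ≤
          a + b * (∫ x, x ∂P) + c * (∫ x, x ^ 2 ∂P) + d * ∫ x, |x| ^ 3 ∂P := by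
  obtain ⟨huv0, hQ0⟩ := mul_ne_zero_iff.mp (recenteringSlack_denom_pos huv hv).ne'
  have hmajorant (x : ℝ) : a + b * x + c * x ^ 2 + d * |x| ^ 3 =
      (|r| - Real.sign r * x) ^ 3 + recenteringSlack u v (Real.sign r * x) := by
    rw [recenteringSlack, ha, hb, hc, hd, hW, ← sq_abs r]
    rcases Real.sign_apply_eq_of_ne_zero r hr with hs | hs <;>
      simp only [hs, neg_one_mul, one_mul, abs_neg] <;> field_simp <;> ring
  have hss := Real.sign_mul_sign_of_ne_zero hr
  have hpt (x : ℝ) : |x - r| ^ 3 ≤ a + b * x + c * x ^ 2 + d * |x| ^ 3 := by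
    rw [hmajorant, Real.abs_sub_eq_abs_sign_mul_sub_abs hr]
    exact abs_sub_pow_three_le_add_recenteringSlack huv hv hvr _
  refine ⟨hpt, ?_, ?_, fun P _ h3 => integral_le_of_le_cubic h3 (fun _ => by positivity) hpt⟩
  · rw [hmajorant, Real.abs_sub_eq_abs_sign_mul_sub_abs hr,
      show Real.sign r * (-u * Real.sign r) = -u by linear_combination -u * hss,
      recenteringSlack_neg_left_eq_zero huv hv, abs_of_nonpos (by linarith [abs_nonneg r])]
    ring
  · rw [hmajorant, Real.abs_sub_eq_abs_sign_mul_sub_abs hr,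
      show Real.sign r * (v * Real.sign r) = v by linear_combination v * hss,
      recenteringSlack_right_eq_zero huv hv, abs_of_nonpos (by linarith)]
    ring
end

section
/- Let P be a probability measure on a measurable space (X, 𝒜), let k ∈ ℕ, and let f₁,…,f_k be real-valued P-integrable functions on X. Then there exists a probability measure Q on (X, 𝒜) concentrated on at most k + 1 points (i.e. Q is a convex combination of at most k+1 Dirac measures at points of X) such that ∫ fᵢ dQ = ∫ fᵢ dP for every i ∈ {1,…,k}. -/
/-!
The mean `v` of an integrable function with values in a finite-dimensional space lies in the
convex hull of any set `s` containing almost all of its values: otherwise a nonzero functional `l`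
with `l v ≤ l y` on `s` is a.e. equal to `l v`, which confines the function to a hyperplane
through `v`, and induction on the dimension applies. For `x ↦ (f₁ x, …, f_k x) ∈ ℝᵏ`,
Carathéodory's theorem writes the mean as a convex combination of at most `k + 1` of its values,
and the same combination of Dirac masses is `Q`.
-/

open MeasureTheory Module Set
open scoped Pointwise

section ConvexHull

variable {E : Type*} [NormedAddCommGroup E] [NormedSpace ℝ E]

theorem exists_unit_forall_le_of_notMem_convexHull_of_finite [Nontrivial E] {t : Set E}
    (ht : t.Finite) {v : E} (hv : v ∉ convexHull ℝ t) :
    ∃ l ∈ Metric.sphere (0 : StrongDual ℝ E) 1, ∀ y ∈ t, l v ≤ l y := by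
  obtain ⟨f, u, hfv, hfu⟩ := geometric_hahn_banach_point_closed (convex_convexHull ℝ t)
    (ht.isClosed_convexHull ℝ) hv
  have hfy : ∀ y ∈ t, f v < f y := fun y hy => hfv.trans (hfu y (subset_convexHull ℝ t hy))
  rcases eq_or_ne f 0 with rfl | hf
  · obtain ⟨l, hl⟩ := (NormedSpace.sphere_nonempty (x := (0 : StrongDual ℝ E))).2 zero_le_one
    exact ⟨l, hl, fun y hy => absurd (hfy y hy) (lt_irrefl 0)⟩
  · refine ⟨‖f‖⁻¹ • f, by simp [norm_smul, hf], fun y hy => ?_⟩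
    simpa using mul_le_mul_of_nonneg_left (hfy y hy).le (inv_nonneg.2 (norm_nonneg f))

/- `v` may lie on the relative boundary of a non-closed hull, so strict separation is only
available from finite subsets of `s`; compactness of the unit sphere of the dual passes to `s`. -/
theorem exists_ne_zero_forall_le_of_notMem_convexHull [FiniteDimensional ℝ E] [Nontrivial E]
    {s : Set E} {v : E} (hv : v ∉ convexHull ℝ s) :
    ∃ l : StrongDual ℝ E, l ≠ 0 ∧ ∀ y ∈ s, l v ≤ l y := by
  have hfin : ∀ u : Finset s, (Metric.sphere (0 : StrongDual ℝ E) 1 ∩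
      ⋂ y ∈ u, {l | l v ≤ l y}).Nonempty := fun u => by
    obtain ⟨l, hl, hlu⟩ := exists_unit_forall_le_of_notMem_convexHull_of_finite
      (u.finite_toSet.image (↑)) (fun h => hv (convexHull_mono (by simp) h))
    exact ⟨l, hl, by simpa using fun y hy hyu => hlu y ⟨⟨y, hy⟩, hyu, rfl⟩⟩
  obtain ⟨l, hl, hls⟩ := (isCompact_sphere (0 : StrongDual ℝ E) 1).inter_iInter_nonempty
    (fun y : s => {l | l v ≤ l y}) (fun y => isClosed_le (by fun_prop) (by fun_prop)) hfin
  exact ⟨l, ne_zero_of_mem_unit_sphere ⟨l, hl⟩, fun y hy => mem_iInter.1 hls ⟨y, hy⟩⟩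


theorem zero_mem_convexHull_of_integral_eq_zero {X : Type*} [MeasurableSpace X] {μ : Measure X}
    [IsProbabilityMeasure μ] [FiniteDimensional ℝ E] {G : X → E} {s : Set E}
    (hG : Integrable G μ) (hGs : ∀ᵐ x ∂μ, G x ∈ s) (h0 : ∫ x, G x ∂μ = 0) :
    (0 : E) ∈ convexHull ℝ s := by
  induction hn : finrank ℝ E using Nat.strong_induction_on generalizing E with
  | _ n ih =>
  by_contra hs
  rcases subsingleton_or_nontrivial E with hE | hE
  · obtain ⟨x, hx⟩ := hGs.exists
    exact hs (Subsingleton.elim (G x) 0 ▸ subset_convexHull ℝ s hx)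
  obtain ⟨l, hl0, hl⟩ := exists_ne_zero_forall_le_of_notMem_convexHull hs
  have hlG : (fun x => l (G x)) =ᵐ[μ] 0 := by
    refine (integral_eq_zero_iff_of_nonneg_ae ?_ (l.integrable_comp hG)).1 ?_
    · filter_upwards [hGs] with x hx using by simpa using hl (G x) hx
    · rw [l.integral_comp_comm hG, h0, map_zero]
  set K := LinearMap.ker (l : E →ₗ[ℝ] ℝ)
  have hK : finrank ℝ K < n := hn ▸ Submodule.finrank_lt (by
    rwa [Ne, LinearMap.ker_eq_top, ← ContinuousLinearMap.toLinearMap_zero,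
      ContinuousLinearMap.coe_inj])
  obtain ⟨π, hπ⟩ := Submodule.ClosedComplemented.of_finiteDimensional K
  have hπK : ∀ y ∈ K, (π y : E) = y := fun y hy => congrArg Subtype.val (hπ ⟨y, hy⟩)
  have hmem : (0 : K) ∈ convexHull ℝ (K.subtype ⁻¹' s) := by
    refine ih _ hK (π.integrable_comp hG) ?_ (by rw [π.integral_comp_comm hG, h0, map_zero]) rfl
    filter_upwards [hGs, hlG] with x hxs hxK
    simpa [hπK (G x) hxK] using hxs
  have := mem_image_of_mem K.subtype hmem
  rw [K.subtype.image_convexHull] at this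
  exact hs (convexHull_mono (image_preimage_subset _ _) (by simpa using this))

theorem integral_mem_convexHull {X : Type*} [MeasurableSpace X] {μ : Measure X}
    [IsProbabilityMeasure μ] [FiniteDimensional ℝ E] {G : X → E} {s : Set E}
    (hG : Integrable G μ) (hGs : ∀ᵐ x ∂μ, G x ∈ s) : ∫ x, G x ∂μ ∈ convexHull ℝ s := by
  set v := ∫ x, G x ∂μ
  have h := zero_mem_convexHull_of_integral_eq_zero (s := -v +ᵥ s) (hG.sub (integrable_const v))
    (by filter_upwards [hGs] with x hx using by simpa [mem_vadd_set_iff_neg_vadd_mem] using hx)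
    (by simp [integral_sub hG (integrable_const v), v])
  simpa [convexHull_vadd, mem_vadd_set_iff_neg_vadd_mem] using h

end ConvexHull

theorem exists_fin_convexCombination_of_mem_convexHull {𝕜 V : Type*} [Field 𝕜] [LinearOrder 𝕜]
    [IsStrictOrderedRing 𝕜] [AddCommGroup V] [Module 𝕜 V] [FiniteDimensional 𝕜 V] {s : Set V}
    {v : V} (hv : v ∈ convexHull 𝕜 s) :
    ∃ (m : ℕ) (z : Fin m → V) (w : Fin m → 𝕜), m ≤ finrank 𝕜 V + 1 ∧ (∀ j, z j ∈ s) ∧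
      (∀ j, 0 ≤ w j) ∧ ∑ j, w j = 1 ∧ ∑ j, w j • z j = v := by
  obtain ⟨ι, _, z, w, hzs, hz, hw0, hw1, hwz⟩ := eq_pos_convex_span_of_mem_convexHull hv
  let e := (Fintype.equivFin ι).symm
  refine ⟨Fintype.card ι, z ∘ e, w ∘ e, ?_, fun j => hzs ⟨_, rfl⟩, fun j => (hw0 _).le, ?_, ?_⟩
  · exact hz.card_le_finrank_succ.trans (Nat.add_le_add_right (Submodule.finrank_le _) 1)
  · rw [← hw1]; exact e.sum_comp w
  · rw [← hwz]; exact e.sum_comp fun i => w i • z i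

theorem integral_sum_smul_dirac {X E ι : Type*} [MeasurableSpace X] [NormedAddCommGroup E]
    [NormedSpace ℝ E] [CompleteSpace E] [Fintype ι] {x : ι → X} {p : ι → ENNReal}
    (hp : ∀ j, p j ≠ ⊤) {f : X → E}
    (hf : ∀ j, f =ᵐ[Measure.dirac (x j)] fun _ => f (x j)) :
    ∫ y, f y ∂(∑ j, p j • Measure.dirac (x j)) = ∑ j, (p j).toReal • f (x j) := by
  rw [integral_finsetSum_measure fun j _ =>
    ((integrable_const (f (x j))).congr (hf j).symm).smul_measure (hp j)]
  refine Finset.sum_congr rfl fun j _ => ?_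
  rw [integral_smul_measure, integral_congr_ae (hf j), integral_const]
  simp

/- `Measure.dirac x` only sees measurable sets, so an a.e.-measurable `f` need not be
`dirac x`-a.e. constant; it is once `x` avoids the null set where `f` differs from `(hf i).mk`. -/
theorem exists_null_forall_ae_dirac_eq_const {X : Type*} [MeasurableSpace X]
    {μ : Measure X} {ι β : Type*} [Countable ι] [MeasurableSpace β] [MeasurableSingletonClass β]
    {f : ι → X → β} (hf : ∀ i, AEMeasurable (f i) μ) :
    ∃ N, μ N = 0 ∧ ∀ x ∉ N, ∀ i, f i =ᵐ[Measure.dirac x] fun _ => f i x := by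
  set N := toMeasurable μ (⋃ i, {x | f i x ≠ (hf i).mk _ x})
  have hN : MeasurableSet N := measurableSet_toMeasurable _ _
  have hfg : ∀ i, EqOn (f i) ((hf i).mk _) Nᶜ := fun i x hx => by
    by_contra h
    exact hx (subset_toMeasurable _ _ (mem_iUnion.2 ⟨i, h⟩))
  refine ⟨N, by rw [measure_toMeasurable]; exact measure_iUnion_null fun i => (hf i).ae_eq_mk,
    fun x hx i => ?_⟩
  have hdirac : f i =ᵐ[Measure.dirac x] (hf i).mk _ :=
    measure_mono_null (fun y hy => by_contra fun hyN => hy (hfg i hyN))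
      (by simp [Measure.dirac_apply' _ hN, hx])
  filter_upwards [hdirac, ae_eq_dirac' (hf i).measurable_mk] with y h1 h2
  rw [h1, h2, Function.const_apply, ← hfg i hx]

theorem richter_reduction_general {X : Type*} [MeasurableSpace X]
    (P : Measure X) [IsProbabilityMeasure P]
    (k : ℕ) (f : Fin k → X → ℝ) (hf : ∀ i, Integrable (f i) P) :
    ∃ (m : ℕ) (x : Fin m → X) (p : Fin m → ENNReal) (Q : Measure X),
      m ≤ k + 1 ∧ (∑ j, p j) = 1 ∧ Q = ∑ j, p j • Measure.dirac (x j) ∧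
      ∀ i, (∫ y, f i y ∂Q) = ∫ y, f i y ∂P := by
  obtain ⟨N, hN0, hfN⟩ := exists_null_forall_ae_dirac_eq_const fun i => (hf i).aemeasurable
  set F : X → Fin k → ℝ := fun x i => f i x
  have hF : ∫ x, F x ∂P ∈ convexHull ℝ (F '' Nᶜ) :=
    integral_mem_convexHull (Integrable.of_eval hf) <| by
      filter_upwards [measure_eq_zero_iff_ae_notMem.1 hN0] with x hx using mem_image_of_mem F hx
  obtain ⟨m, z, w, hm, hz, hw0, hw1, hwz⟩ := exists_fin_convexCombination_of_mem_convexHull hF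
  choose x hxN hxz using hz
  refine ⟨m, x, fun j => ENNReal.ofReal (w j), _, by rwa [finrank_fin_fun] at hm, ?_, rfl,
    fun i => ?_⟩
  · rw [← ENNReal.ofReal_sum_of_nonneg fun j _ => hw0 j, hw1, ENNReal.ofReal_one]
  · rw [integral_sum_smul_dirac (fun j => ENNReal.ofReal_ne_top) fun j => hfN (x j) (hxN j) i,
      ← eval_integral hf, ← hwz]
    simp [ENNReal.toReal_ofReal (hw0 _), ← hxz, F]

/-- **Theorem (Richter).** Let `P` be a probability measure on a measurable space `X`,
`k ∈ ℕ`, and `f₁, …, f_k` real-valued `P`-integrable functions on `X`. Then there is a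
probability measure `Q` on `X`, a convex combination of at most `k + 1` Dirac measures,
with `∫ fᵢ dQ = ∫ fᵢ dP` for all `i`. -/
theorem richter_reduction {X : Type*} [MeasurableSpace X]
    (P : Measure X) [IsProbabilityMeasure P]
    (k : ℕ) (hk : 0 < k) (f : Fin k → X → ℝ) (hf : ∀ i, Integrable (f i) P) :
    ∃ (m : ℕ) (x : Fin m → X) (p : Fin m → ENNReal) (Q : Measure X),
      m ≤ k + 1 ∧ (∑ j, p j) = 1 ∧ Q = ∑ j, p j • Measure.dirac (x j) ∧
      ∀ i, (∫ y, f i y ∂Q) = ∫ y, f i y ∂P :=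
  richter_reduction_general P k f hf
end

section
/- Let X be a set, let k ∈ ℕ, and let f₁,…,f_k be real-valued functions on X. Then every finitely supported probability measure P on X can be written as a finite convex combination P = Σ_{j=1}^{m} λⱼ·Pⱼ (λⱼ ≥ 0, Σλⱼ = 1) of finitely supported probability measures Pⱼ, each concentrated on at most k + 1 of the support points of P and each satisfying ∫ fᵢ dPⱼ = ∫ fᵢ dP for every i ∈ {1,…,k}. -/
/-!
If `P` has more than `k + 1` support points, the `k + 1` linear constraints (total mass and the
`k` moments) leave a nonzero direction `w` supported on `supp P`. Having total mass zero, `w` has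
entries of both signs, so moving from `P` along `w` and along `-w` until some weight vanishes
exhibits `P` as a convex combination of two nonnegative weights with the same mass and moments and
strictly smaller support. Induction on the size of the support concludes.
-/

open Finset Module

theorem mem_segment_add_smul_add_smul_neg {E : Type*} [AddCommGroup E] [Module ℝ E]
    (x v : E) {s t : ℝ} (hs : 0 < s) (ht : 0 < t) :
    x ∈ segment ℝ (x + s • v) (x + t • -v) := by
  refine ⟨t / (s + t), s / (s + t), by positivity, by positivity, by field_simp; ring, ?_⟩
  match_scalars <;> field_simp <;> ring

theorem exists_fin_sum_smul_eq_of_mem_convexHull {E : Type*} [AddCommGroup E] [Module ℝ E]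
    {s : Set E} {x : E} (hx : x ∈ convexHull ℝ s) :
    ∃ (m : ℕ) (w : Fin m → ℝ) (z : Fin m → E),
      (∀ j, 0 ≤ w j) ∧ ∑ j, w j = 1 ∧ x = ∑ j, w j • z j ∧ ∀ j, z j ∈ s := by
  obtain ⟨ι, _, w, z, hw₀, hw₁, hz, rfl⟩ := mem_convexHull_iff_exists_fintype.mp hx
  let e := Fintype.equivFin ι
  refine ⟨Fintype.card ι, w ∘ e.symm, z ∘ e.symm, fun j => hw₀ _, ?_, ?_, fun j => hz _⟩
  · rw [← hw₁]
    exact e.symm.sum_comp w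
  · exact (e.symm.sum_comp fun i => w i • z i).symm

namespace Finsupp

variable {X : Type*}

theorem exists_ne_zero_support_subset_ker {V : Type*} [AddCommGroup V] [Module ℝ V]
    [FiniteDimensional ℝ V] (Ψ : (X →₀ ℝ) →ₗ[ℝ] V) (s : Finset X) (hs : finrank ℝ V < #s) :
    ∃ w : X →₀ ℝ, w ≠ 0 ∧ w.support ⊆ s ∧ Ψ w = 0 := by
  let S := supported ℝ ℝ (s : Set X)
  let e : S ≃ₗ[ℝ] (s →₀ ℝ) := supportedEquivFinsupp (s : Set X)
  have : FiniteDimensional ℝ S := e.symm.finiteDimensional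
  have hdim : finrank ℝ S = #s := by simp [e.finrank_eq]
  obtain ⟨⟨w, hws⟩, hw, hw0⟩ := Submodule.exists_mem_ne_zero_of_ne_bot
    (LinearMap.ker_ne_bot_of_finrank_lt (K := ℝ) (V := S) (V₂ := V) (f := Ψ.domRestrict S)
      (by rw [hdim]; exact hs))
  exact ⟨w, fun h => hw0 (Subtype.ext h), by simpa [S, mem_supported] using hws, hw⟩

theorem exists_neg_of_sum_eq_zero {w : X →₀ ℝ} (hw : w ≠ 0) (hsum : w.sum (fun _ p => p) = 0) :
    ∃ x, w x < 0 := by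
  by_contra! h
  have := (sum_eq_zero_iff_of_nonneg fun x _ => h x).mp hsum
  exact hw (ext fun x => by_contra fun hx => hx (this x (mem_support_iff.mpr hx)))

theorem exists_pos_support_add_smul_ssubset {P w : X →₀ ℝ} (hP : 0 ≤ P)
    (hw : w.support ⊆ P.support) (hneg : ∃ x, w x < 0) :
    ∃ t : ℝ, 0 < t ∧ 0 ≤ P + t • w ∧ (P + t • w).support ⊂ P.support := by
  classical
  -- `t` is the largest step along `w` that keeps every weight nonnegative
  obtain ⟨x₀, hx₀, hmin⟩ := {x ∈ P.support | w x < 0}.exists_min_image (fun x => P x / -w x)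
    (by obtain ⟨x, hx⟩ := hneg; exact ⟨x, by simp [hw (mem_support_iff.mpr hx.ne), hx]⟩)
  simp only [mem_filter, mem_support_iff] at hx₀ hmin
  have hPx₀ : 0 < P x₀ := (hP x₀).lt_of_ne (Ne.symm hx₀.1)
  have hwx₀ : 0 < -w x₀ := neg_pos.mpr hx₀.2
  refine ⟨P x₀ / -w x₀, div_pos hPx₀ hwx₀, fun x => ?_, ?_⟩
  · simp only [coe_zero, Pi.zero_apply, coe_add, coe_smul, Pi.add_apply, Pi.smul_apply,
      smul_eq_mul]
    rcases le_or_gt 0 (w x) with hwx | hwx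
    · exact add_nonneg (hP x) (mul_nonneg (div_pos hPx₀ hwx₀).le hwx)
    · have hle := hmin x ⟨mem_support_iff.mp (hw (mem_support_iff.mpr hwx.ne)), hwx⟩
      rw [le_div_iff₀ (neg_pos.mpr hwx)] at hle
      linarith
  · refine (ssubset_iff_of_subset ?_).mpr ⟨x₀, mem_support_iff.mpr hx₀.1, ?_⟩
    · exact support_add.trans (union_subset subset_rfl (support_smul.trans hw))
    · rw [notMem_support_iff, add_apply, smul_apply, smul_eq_mul]
      field_simp [hx₀.2.ne]
      ring

theorem mem_convexHull_setOf_card_support_le {V : Type*} [AddCommGroup V] [Module ℝ V]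
    [FiniteDimensional ℝ V] {Ψ : (X →₀ ℝ) →ₗ[ℝ] V}
    (hΨ : ∀ w, Ψ w = 0 → w.sum (fun _ p => p) = 0) {P : X →₀ ℝ} (hP : 0 ≤ P) :
    P ∈ convexHull ℝ
      {Q | 0 ≤ Q ∧ Q.support ⊆ P.support ∧ Ψ Q = Ψ P ∧ #Q.support ≤ finrank ℝ V} := by
  induction hn : #P.support using Nat.strong_induction_on generalizing P with
  | _ n ih =>
  subst hn
  set C := {Q | 0 ≤ Q ∧ Q.support ⊆ P.support ∧ Ψ Q = Ψ P ∧ #Q.support ≤ finrank ℝ V}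
  by_cases hcard : #P.support ≤ finrank ℝ V
  · exact subset_convexHull ℝ C ⟨hP, subset_rfl, rfl, hcard⟩
  obtain ⟨w, hw0, hws, hΨw⟩ := exists_ne_zero_support_subset_ker Ψ P.support (not_le.mp hcard)
  have step : ∀ v : X →₀ ℝ, v.support ⊆ P.support → Ψ v = 0 → v ≠ 0 →
      ∃ t : ℝ, 0 < t ∧ P + t • v ∈ convexHull ℝ C := by
    intro v hvs hΨv hv0
    obtain ⟨t, ht, hQ, hQs⟩ :=
      exists_pos_support_add_smul_ssubset hP hvs (exists_neg_of_sum_eq_zero hv0 (hΨ v hΨv))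
    refine ⟨t, ht, convexHull_mono ?_ (ih _ (card_lt_card hQs) hQ rfl)⟩
    rintro Q ⟨hQ0, hQsub, hΨQ, hQcard⟩
    exact ⟨hQ0, hQsub.trans hQs.subset, by simp [hΨQ, hΨv], hQcard⟩
  obtain ⟨s, hs, h₁⟩ := step w hws hΨw hw0
  obtain ⟨t, ht, h₂⟩ := step (-w) (by simpa using hws) (by simp [hΨw]) (neg_ne_zero.mpr hw0)
  exact (convex_convexHull ℝ C).segment_subset h₁ h₂ (mem_segment_add_smul_add_smul_neg P w hs ht)

end Finsupp

theorem hoeffding_extreme_point_representation_general {X : Type*} (k : ℕ)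
    (f : Fin k → X → ℝ) (P : X →₀ ℝ)
    (hpos : ∀ x, 0 ≤ P x) (hsum : P.sum (fun _ p => p) = 1) :
    ∃ (m : ℕ) (lam : Fin m → ℝ) (Pj : Fin m → (X →₀ ℝ)),
      (∀ j, 0 ≤ lam j) ∧ (∑ j, lam j) = 1 ∧ P = ∑ j, lam j • Pj j ∧
      ∀ j, (∀ x, 0 ≤ Pj j x) ∧ (Pj j).sum (fun _ p => p) = 1 ∧
        (Pj j).support ⊆ P.support ∧ (Pj j).support.card ≤ k + 1 ∧
        ∀ i, (Pj j).sum (fun x p => p * f i x) = P.sum (fun x p => p * f i x) := by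
  let Ψ : (X →₀ ℝ) →ₗ[ℝ] ℝ × (Fin k → ℝ) :=
    (Finsupp.linearCombination ℝ fun _ => 1).prod
      (LinearMap.pi fun i => Finsupp.linearCombination ℝ (f i))
  have hΨ : ∀ w, Ψ w = 0 → w.sum (fun _ p => p) = 0 := fun w hw => by
    simpa [Ψ, Finsupp.linearCombination_apply] using congrArg Prod.fst hw
  obtain ⟨m, lam, Pj, hlam, hlam₁, hP, hPj⟩ :=
    exists_fin_sum_smul_eq_of_mem_convexHull (Finsupp.mem_convexHull_setOf_card_support_le hΨ hpos)
  refine ⟨m, lam, Pj, hlam, hlam₁, hP, fun j => ?_⟩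
  obtain ⟨hPj₀, hPjs, hΨPj, hPjcard⟩ := hPj j
  refine ⟨hPj₀, ?_, hPjs, by simpa [add_comm] using hPjcard, fun i => ?_⟩
  · simpa [Ψ, Finsupp.linearCombination_apply, hsum] using congrArg Prod.fst hΨPj
  · exact congrFun (congrArg Prod.snd hΨPj) i

/-- **Theorem (Hoeffding).** Let `X` be a set, `k ∈ ℕ`, and `f₁, …, f_k` real-valued
functions on `X`. Every finitely supported probability measure `P` on `X` (modelled as a
finitely supported nonnegative weight function summing to `1`) is a finite convex
combination `P = Σⱼ λⱼ Pⱼ` of finitely supported probability measures `Pⱼ`, each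
supported on at most `k + 1` of the support points of `P` and each satisfying
`∫ fᵢ dPⱼ = ∫ fᵢ dP` for every `i`. -/
theorem hoeffding_extreme_point_representation {X : Type*} (k : ℕ) (hk : 0 < k)
    (f : Fin k → X → ℝ) (P : X →₀ ℝ)
    (hpos : ∀ x, 0 ≤ P x) (hsum : P.sum (fun _ p => p) = 1) :
    ∃ (m : ℕ) (lam : Fin m → ℝ) (Pj : Fin m → (X →₀ ℝ)),
      (∀ j, 0 ≤ lam j) ∧ (∑ j, lam j) = 1 ∧ P = ∑ j, lam j • Pj j ∧
      ∀ j, (∀ x, 0 ≤ Pj j x) ∧ (Pj j).sum (fun _ p => p) = 1 ∧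
        (Pj j).support ⊆ P.support ∧ (Pj j).support.card ≤ k + 1 ∧
        ∀ i, (Pj j).sum (fun x p => p * f i x) = P.sum (fun x p => p * f i x) :=
  hoeffding_extreme_point_representation_general k f P hpos hsum
end

section
/- Let X be a set, k ∈ ℕ, f₁,…,f_k real-valued functions on X, c₁,…,c_k ∈ ℝ, and let 𝒫 be the set of all finitely supported probability measures P on X with ∫ fᵢ dP = cᵢ for every i ∈ {1,…,k}. Let F : 𝒫 → ℝ ∪ {±∞} be quasi-convex, i.e. F(λP + (1−λ)Q) ≤ max{F(P), F(Q)} for all P, Q ∈ 𝒫 and λ ∈ [0,1]. Then sup{F(P) : P ∈ 𝒫} = sup{F(P) : P ∈ 𝒫, P concentrated on at most k + 1 points}. -/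
/-- Membership in the class `𝒫` of finitely supported probability measures on `X`
(modelled as finitely supported nonnegative weight functions summing to `1`) satisfying
the moment constraints `∫ fᵢ dP = cᵢ`. -/
def isConstrainedFSProb {X : Type*} {k : ℕ} (f : Fin k → X → ℝ) (c : Fin k → ℝ)
    (P : X →₀ ℝ) : Prop :=
  (∀ x, 0 ≤ P x) ∧ P.sum (fun _ p => p) = 1 ∧ ∀ i, P.sum (fun x p => p * f i x) = c i

/-!
If `P` has more than `k + 1` atoms, the `k + 1` linear conditions "total mass" and "`fᵢ`-moment"
on its weights have a nonzero solution `w` supported on `supp P`. As `w` has total mass `0`, it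
has weights of both signs, so moving from `P` along `w` and along `-w` until a weight vanishes
gives two admissible measures of strictly smaller support, with `P` on the segment between them.
Quasi-convexity bounds `F P` by the larger of their values, and induction on the size of the
support finishes the proof.
-/

section

open Finset Finsupp Module

variable {X : Type*}

theorem exists_ne_zero_supported_linearCombination_eq_zero {K V : Type*} [Field K]
    [AddCommGroup V] [Module K V] [FiniteDimensional K V] (v : X → V) (s : Finset X)
    (hs : finrank K V < #s) :
    ∃ w ∈ supported K K (s : Set X), w ≠ 0 ∧ linearCombination K v w = 0 := by
  have hdep : ¬ LinearIndepOn K v (s : Set X) := fun h => by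
    have := (linearIndependent_comp_subtype_iff.mpr h).fintype_card_le_finrank
    simp only [SetLike.coe_sort_coe, Fintype.card_coe] at this
    omega
  simpa [linearIndepOn_iff, and_comm] using hdep

theorem Finsupp.exists_neg_of_sum_eq_zero_s18 {w : X →₀ ℝ} (hw : w ≠ 0)
    (hsum : w.sum (fun _ a => a) = 0) : ∃ x, w x < 0 := by
  by_contra! hnn
  obtain ⟨x, hx⟩ := support_nonempty_iff.mpr hw
  exact mem_support_iff.mp hx ((sum_eq_zero_iff_of_nonneg fun y _ => hnn y).mp hsum x hx)

theorem Finsupp.exists_pos_add_smul_support_ssubset {P w : X →₀ ℝ} (hP : 0 ≤ P)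
    (hw : w.support ⊆ P.support) (hneg : ∃ x, w x < 0) :
    ∃ t : ℝ, 0 < t ∧ 0 ≤ P + t • w ∧ (P + t • w).support ⊂ P.support := by
  classical
  obtain ⟨x₀, hx₀, hmin⟩ := exists_min_image {x ∈ P.support | w x < 0} (fun x => P x / -w x)
    (hneg.imp fun x hx => mem_filter.mpr ⟨hw (mem_support_iff.mpr hx.ne), hx⟩)
  obtain ⟨hx₀P, hwx₀⟩ := mem_filter.mp hx₀
  have hPx₀ : 0 < P x₀ := (hP x₀).lt_of_ne' (mem_support_iff.mp hx₀P)
  -- the largest step keeping `P + t • w` nonnegative; it kills the weight at `x₀`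
  set t := P x₀ / -w x₀
  have ht : 0 < t := div_pos hPx₀ (neg_pos.mpr hwx₀)
  refine ⟨t, ht, fun x => ?_, ?_⟩
  · simp only [coe_zero, Pi.zero_apply, coe_add, coe_smul, Pi.add_apply, Pi.smul_apply,
      smul_eq_mul]
    rcases le_or_gt 0 (w x) with hwx | hwx
    · exact add_nonneg (hP x) (mul_nonneg ht.le hwx)
    · have hxP : x ∈ P.support := hw (mem_support_iff.mpr hwx.ne)
      have := hmin x (mem_filter.mpr ⟨hxP, hwx⟩)
      rw [le_div_iff₀ (neg_pos.mpr hwx)] at this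
      linarith
  · have hsub : (P + t • w).support ⊆ P.support :=
      support_add.trans (union_subset subset_rfl ((support_smul).trans hw))
    refine (ssubset_iff_of_subset hsub).mpr ⟨x₀, hx₀P, notMem_support_iff.mpr ?_⟩
    simp only [coe_add, coe_smul, Pi.add_apply, Pi.smul_apply, smul_eq_mul, t]
    field_simp [hwx₀.ne]
    ring

theorem exists_convex_split_of_finrank_lt_card {V : Type*} [AddCommGroup V] [Module ℝ V]
    [FiniteDimensional ℝ V] (v : X → V) (ℓ : V →ₗ[ℝ] ℝ) (hℓ : ∀ x, ℓ (v x) = 1)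
    {P : X →₀ ℝ} (hP : 0 ≤ P) (hcard : finrank ℝ V < #P.support) :
    ∃ Q₁ Q₂ : X →₀ ℝ, ∃ lam : ℝ, 0 ≤ lam ∧ lam ≤ 1 ∧ lam • Q₁ + (1 - lam) • Q₂ = P ∧
      (0 ≤ Q₁ ∧ linearCombination ℝ v Q₁ = linearCombination ℝ v P ∧ Q₁.support ⊂ P.support) ∧
      (0 ≤ Q₂ ∧ linearCombination ℝ v Q₂ = linearCombination ℝ v P ∧ Q₂.support ⊂ P.support) := by
  obtain ⟨w, hwP, hw0, hvw⟩ :=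
    exists_ne_zero_supported_linearCombination_eq_zero (K := ℝ) v P.support hcard
  have hwP : w.support ⊆ P.support := by exact_mod_cast (mem_supported ℝ w).mp hwP
  have hmove : ∀ u : X →₀ ℝ, u ≠ 0 → u.support ⊆ P.support → linearCombination ℝ v u = 0 →
      ∃ t : ℝ, 0 < t ∧ 0 ≤ P + t • u ∧
        linearCombination ℝ v (P + t • u) = linearCombination ℝ v P ∧
        (P + t • u).support ⊂ P.support := by
    intro u hu0 huP hvu
    have hmass : u.sum (fun _ a => a) = 0 := by
      have := congrArg ℓ hvu
      rw [apply_linearCombination, map_zero] at this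
      simpa [Function.comp_def, hℓ, linearCombination_apply] using this
    obtain ⟨t, ht, hnn, hsupp⟩ :=
      exists_pos_add_smul_support_ssubset hP huP (exists_neg_of_sum_eq_zero_s18 hu0 hmass)
    exact ⟨t, ht, hnn, by simp [hvu], hsupp⟩
  obtain ⟨t₁, ht₁, hQ₁⟩ := hmove w hw0 hwP hvw
  obtain ⟨t₂, ht₂, hQ₂⟩ := hmove (-w) (neg_ne_zero.mpr hw0) (by rwa [support_neg])
    (by rw [map_neg, hvw, neg_zero])
  refine ⟨_, _, t₂ / (t₁ + t₂), by positivity, (div_le_one (by positivity)).mpr (by linarith),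
    ?_, hQ₁, hQ₂⟩
  ext x
  simp only [Finsupp.coe_add, Finsupp.coe_smul, Finsupp.coe_neg, Pi.add_apply, Pi.smul_apply,
    Pi.neg_apply, smul_eq_mul]
  field_simp
  ring

theorem le_sSup_image_of_forall_exists_convex_split {α : Type*} [CompleteLinearOrder α]
    {S : Set (X →₀ ℝ)} {F : (X →₀ ℝ) → α} {n : ℕ}
    (hqc : ∀ P ∈ S, ∀ Q ∈ S, ∀ lam : ℝ, 0 ≤ lam → lam ≤ 1 →
      F (lam • P + (1 - lam) • Q) ≤ max (F P) (F Q))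
    (hsplit : ∀ P ∈ S, n < #P.support → ∃ Q₁ ∈ S, ∃ Q₂ ∈ S, ∃ lam : ℝ, 0 ≤ lam ∧ lam ≤ 1 ∧
      lam • Q₁ + (1 - lam) • Q₂ = P ∧ #Q₁.support < #P.support ∧ #Q₂.support < #P.support)
    {P : X →₀ ℝ} (hP : P ∈ S) : F P ≤ sSup (F '' {Q ∈ S | #Q.support ≤ n}) := by
  induction hm : #P.support using Nat.strong_induction_on generalizing P with
  | _ m ih =>
    by_cases hmn : m ≤ n
    · exact le_sSup ⟨P, ⟨hP, hm ▸ hmn⟩, rfl⟩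
    obtain ⟨Q₁, hQ₁, Q₂, hQ₂, lam, hlam₀, hlam₁, rfl, hcard₁, hcard₂⟩ :=
      hsplit P hP (by omega)
    exact (hqc Q₁ hQ₁ Q₂ hQ₂ lam hlam₀ hlam₁).trans
      (max_le (ih _ (hm ▸ hcard₁) hQ₁ rfl) (ih _ (hm ▸ hcard₂) hQ₂ rfl))

def massMoments {k : ℕ} (f : Fin k → X → ℝ) (x : X) : ℝ × (Fin k → ℝ) := (1, fun i => f i x)

theorem isConstrainedFSProb_iff {k : ℕ} {f : Fin k → X → ℝ} {c : Fin k → ℝ} {P : X →₀ ℝ} :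
    isConstrainedFSProb f c P ↔ 0 ≤ P ∧ linearCombination ℝ (massMoments f) P = (1, c) := by
  simp [isConstrainedFSProb, linearCombination_apply, Finsupp.le_def, Prod.ext_iff, funext_iff,
    massMoments, Finsupp.sum, Prod.fst_sum, Prod.snd_sum, Finset.sum_apply]

theorem isConstrainedFSProb.exists_convex_split {k : ℕ} {f : Fin k → X → ℝ} {c : Fin k → ℝ}
    {P : X →₀ ℝ} (hP : isConstrainedFSProb f c P) (hcard : k + 1 < #P.support) :
    ∃ Q₁, isConstrainedFSProb f c Q₁ ∧ ∃ Q₂, isConstrainedFSProb f c Q₂ ∧ ∃ lam : ℝ,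
      0 ≤ lam ∧ lam ≤ 1 ∧ lam • Q₁ + (1 - lam) • Q₂ = P ∧
      #Q₁.support < #P.support ∧ #Q₂.support < #P.support := by
  rw [isConstrainedFSProb_iff] at hP
  obtain ⟨Q₁, Q₂, lam, hlam₀, hlam₁, hP_eq, ⟨hQ₁, hvQ₁, hs₁⟩, ⟨hQ₂, hvQ₂, hs₂⟩⟩ :=
    exists_convex_split_of_finrank_lt_card (massMoments f) (LinearMap.fst ℝ ℝ _)
      (fun _ => rfl) hP.1 (by simpa [add_comm] using hcard)
  simp only [isConstrainedFSProb_iff]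
  exact ⟨Q₁, ⟨hQ₁, hvQ₁.trans hP.2⟩, Q₂, ⟨hQ₂, hvQ₂.trans hP.2⟩, lam, hlam₀, hlam₁, hP_eq,
    card_lt_card hs₁, card_lt_card hs₂⟩

end

theorem tyurin_reduction_general {X : Type*} (k : ℕ)
    (f : Fin k → X → ℝ) (c : Fin k → ℝ) (F : (X →₀ ℝ) → EReal)
    (hqc : ∀ P Q : X →₀ ℝ, isConstrainedFSProb f c P → isConstrainedFSProb f c Q →
      ∀ lam : ℝ, 0 ≤ lam → lam ≤ 1 →
        F (lam • P + (1 - lam) • Q) ≤ max (F P) (F Q)) :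
    sSup (F '' {P | isConstrainedFSProb f c P}) =
      sSup (F '' {P | isConstrainedFSProb f c P ∧ P.support.card ≤ k + 1}) := by
  refine le_antisymm (sSup_le ?_) (sSup_le_sSup (Set.image_mono fun P hP => hP.1))
  rintro _ ⟨P, hP, rfl⟩
  exact le_sSup_image_of_forall_exists_convex_split (fun P hP Q hQ => hqc P Q hP hQ)
    (fun Q hQ hcard => isConstrainedFSProb.exists_convex_split hQ hcard) hP

/-- **Theorem (Tyurin).** Let `X` be a set, `k ∈ ℕ`, `f₁, …, f_k : X → ℝ`,
`c₁, …, c_k ∈ ℝ`, and let `𝒫` be the set of all finitely supported probability measures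
`P` on `X` with `∫ fᵢ dP = cᵢ` for all `i`. If `F : 𝒫 → ℝ ∪ {±∞}` is quasi-convex, then
`sup{F(P) : P ∈ 𝒫} = sup{F(P) : P ∈ 𝒫, P concentrated on at most k + 1 points}`. -/
theorem tyurin_reduction {X : Type*} (k : ℕ) (hk : 0 < k)
    (f : Fin k → X → ℝ) (c : Fin k → ℝ) (F : (X →₀ ℝ) → EReal)
    (hqc : ∀ P Q : X →₀ ℝ, isConstrainedFSProb f c P → isConstrainedFSProb f c Q →
      ∀ lam : ℝ, 0 ≤ lam → lam ≤ 1 →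
        F (lam • P + (1 - lam) • Q) ≤ max (F P) (F Q)) :
    sSup (F '' {P | isConstrainedFSProb f c P}) =
      sSup (F '' {P | isConstrainedFSProb f c P ∧ P.support.card ≤ k + 1}) :=
  tyurin_reduction_general k f c F hqc
end
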